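/- arXiv:2604.01511 — 8 statements merged into one kernel-verified Lean document; each statement's English description precedes it below -/
import Mathlib

section
/- Let Z and X be finite-dimensional real normed vector spaces, K ⊆ Z a convex cone, m* ∈ Z*, and L ∈ B(Z,X) such that L(K) = X. Then the following are equivalent: (i) there exists p* ∈ X* such that p*(L(z)) − m*(z) ≤ 0 for all z ∈ K; (ii) m*(z0) ≥ 0 for every z0 ∈ K such that L(z0) = 0. -/
/-- Theorem: non-strict separation. Let `Z, X` be finite-dimensional
real normed spaces, `K ⊆ Z` a convex cone, `m* ∈ Z*` and `L ∈ B(Z,X)` with `L(K) = X`.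
Then there exists `p* ∈ X*` with `p*(L z) - m*(z) ≤ 0` for all `z ∈ K` if and only if
`m*(z0) ≥ 0` for every `z0 ∈ K` with `L z0 = 0`. -/
theorem exists_functional_conic_ineq_iff_nonneg_on_kernel
    {Z X : Type*} [NormedAddCommGroup Z] [NormedSpace ℝ Z] [FiniteDimensional ℝ Z]
    [NormedAddCommGroup X] [NormedSpace ℝ X] [FiniteDimensional ℝ X]
    (K : Set Z) (hKcone : ∀ z ∈ K, ∀ α : ℝ, 0 ≤ α → α • z ∈ K) (hKconv : Convex ℝ K)
    (mstar : Z →L[ℝ] ℝ) (L : Z →L[ℝ] X) (hLK : L '' K = Set.univ) :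
    (∃ pstar : X →L[ℝ] ℝ, ∀ z ∈ K, pstar (L z) - mstar z ≤ 0) ↔
      (∀ z0 ∈ K, L z0 = 0 → 0 ≤ mstar z0) := by
  constructor
  · rintro ⟨pstar, hp⟩ z0 hz0 hLz0
    have := hp z0 hz0
    rw [hLz0] at this
    simpa using this
  · intro h
    -- surjectivity of L on K
    have hsurj : ∀ x : X, ∃ z ∈ K, L z = x := by
      intro x
      have : x ∈ L '' K := by rw [hLK]; trivial
      obtain ⟨z, hz, hzx⟩ := this
      exact ⟨z, hz, hzx⟩
    -- 0 ∈ K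
    have h0K : (0 : Z) ∈ K := by
      obtain ⟨z, hz, -⟩ := hsurj 0
      simpa using hKcone z hz 0 le_rfl
    -- the convex cone C in X × ℝ
    set C : Set (X × ℝ) :=
      {p | ∃ z ∈ K, ∃ r : ℝ, 0 ≤ r ∧ p = (L z, mstar z + r)} with hC
    have hmemC : ∀ z ∈ K, ∀ r : ℝ, 0 ≤ r → (L z, mstar z + r) ∈ C := by
      intro z hz r hr; exact ⟨z, hz, r, hr, rfl⟩
    have hCconv : Convex ℝ C := by
      rintro p ⟨z1, hz1, r1, hr1, rfl⟩ q ⟨z2, hz2, r2, hr2, rfl⟩ a b ha hb hab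
      refine ⟨a • z1 + b • z2, hKconv hz1 hz2 ha hb hab, a * r1 + b * r2,
        by positivity, ?_⟩
      simp [Prod.ext_iff, map_add, map_smul, smul_eq_mul]
      ring
    have hCcone : ∀ p ∈ C, ∀ t : ℝ, 0 ≤ t → t • p ∈ C := by
      rintro p ⟨z, hz, r, hr, rfl⟩ t ht
      refine ⟨t • z, hKcone z hz t ht, t * r, by positivity, ?_⟩
      simp [Prod.ext_iff, map_smul, smul_eq_mul]
      ring
    have h0C : (0 : X × ℝ) ∈ C := by
      simpa using hCcone _ (hmemC 0 h0K 0 le_rfl) 0 le_rfl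
    -- the linear span of C is everything
    have hspan : Submodule.span ℝ C = ⊤ := by
      rw [Submodule.eq_top_iff']
      intro v
      obtain ⟨z, hz, hzx⟩ := hsurj v.1
      have h1 : ((L z, mstar z) : X × ℝ) ∈ C := by
        simpa using hmemC z hz 0 le_rfl
      have h2 : ((0, 1) : X × ℝ) ∈ C := by
        simpa using hmemC 0 h0K 1 zero_le_one
      have : v = ((L z, mstar z) : X × ℝ) + (v.2 - mstar z) • ((0, 1) : X × ℝ) := by
        rw [hzx]
        simp [Prod.ext_iff]
      rw [this]
      exact Submodule.add_mem _ (Submodule.subset_span h1)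
        (Submodule.smul_mem _ _ (Submodule.subset_span h2))
    have haff : affineSpan ℝ C = ⊤ := by
      rw [← AffineSubspace.coe_eq_univ_iff]
      have h1 : (affineSpan ℝ (insert (0 : X × ℝ) C) : Set (X × ℝ))
          = Submodule.span ℝ C := affineSpan_insert_zero C
      rw [Set.insert_eq_self.mpr h0C] at h1
      rw [h1, hspan]
      simp
    -- interior of C is nonempty
    have hint : (interior C).Nonempty :=
      (hCconv.interior_nonempty_iff_affineSpan_eq_top).mpr haff
    obtain ⟨x0, hx0⟩ := hint
    -- (0, -1) is not in C
    have hnot : ((0 : X), (-1 : ℝ)) ∉ C := by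
      rintro ⟨z, hz, r, hr, heq⟩
      have h1 : L z = 0 := by
        have := congrArg Prod.fst heq; simpa using this.symm
      have h2 : mstar z + r = -1 := by
        have := congrArg Prod.snd heq; simpa using this.symm
      have := h z hz h1
      linarith
    -- not in interior C either
    have hnotint : ((0 : X), (-1 : ℝ)) ∉ interior C := fun hh => hnot (interior_subset hh)
    obtain ⟨f, hf⟩ := geometric_hahn_banach_open_point hCconv.interior isOpen_interior hnotint
    set p : X × ℝ := ((0 : X), (-1 : ℝ)) with hp
    -- f ≤ f p on all of C, by taking limits along segments towards interior points
    have hfle : ∀ c ∈ C, f c ≤ f p := by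
      intro c hc
      have hseg : ∀ t : ℝ, t ∈ Set.Ioo (0 : ℝ) 1 →
          f ((1 - t) • c + t • x0) < f p := by
        intro t ht
        refine hf _ ?_
        exact hCconv.combo_self_interior_mem_interior hc hx0
          (by linarith [ht.2]) ht.1 (by ring)
      have htend : Filter.Tendsto (fun t : ℝ => f ((1 - t) • c + t • x0))
          (nhdsWithin 0 (Set.Ioi 0)) (nhds (f c)) := by
        have : Filter.Tendsto (fun t : ℝ => f ((1 - t) • c + t • x0))
            (nhds 0) (nhds (f ((1 - (0:ℝ)) • c + (0:ℝ) • x0))) := by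
          apply Continuous.tendsto
          fun_prop
        simp only [sub_zero, one_smul, zero_smul, add_zero] at this
        exact this.mono_left nhdsWithin_le_nhds
      refine le_of_tendsto htend ?_
      filter_upwards [Ioo_mem_nhdsGT_of_mem (by norm_num : (0:ℝ) ∈ Set.Ico (0:ℝ) 1)]
        with t ht using (hseg t ht).le
    -- by cone property, f ≤ 0 on C
    have hfnonpos : ∀ c ∈ C, f c ≤ 0 := by
      intro c hc
      by_contra hpos
      push_neg at hpos
      obtain ⟨n, hn⟩ := exists_nat_gt (f p / f c)
      have hmem : (n : ℝ) • c ∈ C := hCcone c hc n (Nat.cast_nonneg n)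
      have := hfle _ hmem
      rw [map_smul, smul_eq_mul] at this
      have hle : (n : ℝ) ≤ f p / f c := (le_div_iff₀ hpos).mpr (by linarith)
      linarith
    -- decompose f: f (x, t) = f (x, 0) + t * f (0, 1)
    have hdecomp : ∀ (x : X) (t : ℝ), f (x, t) = f (x, 0) + t * f ((0 : X), (1 : ℝ)) := by
      intro x t
      have : ((x, t) : X × ℝ) = (x, 0) + t • ((0 : X), (1 : ℝ)) := by
        simp [Prod.ext_iff]
      rw [this, map_add, map_smul, smul_eq_mul]
    set sc : ℝ := -f ((0 : X), (1 : ℝ)) with hsc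
    -- sc ≥ 0
    have hscnn : 0 ≤ sc := by
      have h1 : ((0 : X), (1 : ℝ)) ∈ C := by simpa using hmemC 0 h0K 1 zero_le_one
      have := hfnonpos _ h1
      simp only [hsc]
      linarith
    -- sc > 0
    have hscpos : 0 < sc := by
      rcases lt_or_eq_of_le hscnn with h' | h'
      · exact h'
      -- if sc = 0, then f vanishes on X × {0}, hence f = 0, contradiction
      · exfalso
        have hf01 : f ((0 : X), (1 : ℝ)) = 0 := by simp only [hsc] at h'; linarith
        have hxle : ∀ x : X, f (x, 0) ≤ 0 := by
          intro x
          obtain ⟨z, hz, hzx⟩ := hsurj x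
          have h1 : ((L z, mstar z) : X × ℝ) ∈ C := by simpa using hmemC z hz 0 le_rfl
          have := hfnonpos _ h1
          rw [hdecomp, hf01] at this
          rw [hzx] at this
          linarith
        have hxzero : ∀ x : X, f (x, 0) = 0 := by
          intro x
          have h1 := hxle x
          have h2 := hxle (-x)
          have : f ((-x : X), (0 : ℝ)) = -f (x, 0) := by
            have : ((-x, 0) : X × ℝ) = -((x, 0) : X × ℝ) := by simp
            rw [this, map_neg]
          linarith [h2, this ▸ h2]
        have hfzero : ∀ v : X × ℝ, f v = 0 := by
          intro v
          rw [show v = (v.1, v.2) from rfl, hdecomp, hf01, hxzero]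
          ring
        have h1 := hf x0 hx0
        rw [hfzero, hfzero] at h1
        exact lt_irrefl _ h1
    -- the desired functional
    refine ⟨sc⁻¹ • (f.comp (ContinuousLinearMap.inl ℝ X ℝ)), ?_⟩
    intro z hz
    have h1 : ((L z, mstar z) : X × ℝ) ∈ C := by simpa using hmemC z hz 0 le_rfl
    have h2 := hfnonpos _ h1
    rw [hdecomp] at h2
    have h3 : f ((L z : X), (0 : ℝ)) ≤ mstar z * sc := by
      simp only [hsc] at h2 ⊢
      linarith
    simp only [ContinuousLinearMap.smul_apply, ContinuousLinearMap.comp_apply,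
      ContinuousLinearMap.inl_apply, smul_eq_mul]
    rw [sub_nonpos, inv_mul_le_iff₀ hscpos]
    linarith
end

section
/- Let Z and X be finite-dimensional real normed vector spaces, K ⊆ Z a closed, convex and pointed cone, m* ∈ Z*, and L ∈ B(Z,X). Then the following are equivalent: (i) there exists p* ∈ X* such that p*(L(z)) − m*(z) < 0 for all nonzero z ∈ K; (ii) m*(z0) > 0 for every nonzero z0 ∈ K such that L(z0) = 0. -/
/-!
A closed salient cone `C` in a finite-dimensional space carries a functional positive on
`C \ {0}`: for each unit vector `x ∈ C`, the point `-x ∉ C` is separated from `C` by some `f_x`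
that is nonnegative on `C` with `f_x x > 0`; by compactness of the unit vectors of `C` finitely
many `f_x` suffice, and their sum works.

Apply this to `Q = {(L z, m* z + s) : z ∈ K, 0 ≤ s} ⊆ X × ℝ`. By (ii) and pointedness of `K`,
the map `(z, s) ↦ (L z, m* z + s)` vanishes on the cone `K × [0, ∞)` only at the origin, so it is
bounded below on the unit vectors of that cone; hence `Q` is closed, and it is salient. Writing
the functional as `φ (x, r) = q x + c r`, `(0, 1) ∈ Q` gives `c > 0`, and `p* = -c⁻¹ q`
satisfies `p* (L z) - m* z = -c⁻¹ φ (L z, m* z) < 0`.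
-/

open Metric Set

namespace ProperCone

variable {E F : Type*} [NormedAddCommGroup E] [NormedSpace ℝ E]
  [NormedAddCommGroup F] [NormedSpace ℝ F]

def ofSet (K : Set E) (hK0 : (0 : E) ∈ K) (hKcone : ∀ z ∈ K, ∀ α : ℝ, 0 ≤ α → α • z ∈ K)
    (hKconv : Convex ℝ K) (hKclosed : IsClosed K) : ProperCone ℝ E where
  carrier := K
  zero_mem' := hK0
  add_mem' {x y} hx hy := by
    have hmid := hKconv hx hy one_half_pos.le one_half_pos.le (add_halves 1)
    convert hKcone _ hmid 2 zero_le_two using 1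
    module
  smul_mem' c x hx := hKcone x hx c c.2
  isClosed' := hKclosed

lemma exists_mem_sphere_eq_norm_smul (C : ProperCone ℝ E) {z : E} (hz : z ∈ C) (hz0 : z ≠ 0) :
    ∃ w ∈ (C : Set E) ∩ sphere 0 1, z = ‖z‖ • w :=
  ⟨‖z‖⁻¹ • z, ⟨C.smul_mem hz (by positivity), by simp [norm_smul, hz0]⟩,
    by simp [smul_smul, hz0]⟩

lemma isCompact_inter_sphere [FiniteDimensional ℝ E] (C : ProperCone ℝ E) :
    IsCompact ((C : Set E) ∩ sphere 0 1) :=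
  (isCompact_sphere 0 1).inter_left C.isClosed

theorem exists_dual_pos_of_salient [FiniteDimensional ℝ E] (C : ProperCone ℝ E)
    (hC : (C : ConvexCone ℝ E).Salient) : ∃ φ : StrongDual ℝ E, ∀ x ∈ C, x ≠ 0 → 0 < φ x := by
  set D := {f : StrongDual ℝ E | ∀ y ∈ C, 0 ≤ f y}
  have hcover : (C : Set E) ∩ sphere 0 1 ⊆ ⋃ f ∈ D, {y | 0 < f y} := by
    rintro x ⟨hxC, hx1⟩
    obtain ⟨f, hfC, hfx⟩ :=
      C.hyperplane_separation_point (hC x hxC (ne_zero_of_mem_unit_sphere ⟨x, hx1⟩))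
    exact mem_biUnion hfC (by simpa using hfx)
  obtain ⟨D', hD'D, hD'fin, hD'cover⟩ := C.isCompact_inter_sphere.elim_finite_subcover_image
    (fun f _ ↦ isOpen_lt continuous_const f.continuous) hcover
  refine ⟨∑ f ∈ hD'fin.toFinset, f, fun z hz hz0 ↦ ?_⟩
  obtain ⟨w, hw, hzw⟩ := C.exists_mem_sphere_eq_norm_smul hz hz0
  obtain ⟨f, hfD', hfw⟩ := mem_iUnion₂.1 (hD'cover hw)
  rw [hzw, map_smul, smul_eq_mul, sum_apply]
  exact mul_pos (norm_pos_iff.2 hz0) <| Finset.sum_pos'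
    (fun g hg ↦ hD'D (hD'fin.mem_toFinset.1 hg) w hw.1) ⟨f, hD'fin.mem_toFinset.2 hfD', hfw⟩

lemma exists_pos_mul_norm_le_norm_map [FiniteDimensional ℝ E] (C : ProperCone ℝ E)
    (f : E →L[ℝ] F) (hf : ∀ x ∈ C, f x = 0 → x = 0) : ∃ δ > 0, ∀ x ∈ C, δ * ‖x‖ ≤ ‖f x‖ := by
  obtain ⟨δ, hδ, hδS⟩ := C.isCompact_inter_sphere.exists_forall_le' (f := fun x ↦ ‖f x‖)
    (by fun_prop) fun x hx ↦
      norm_pos_iff.2 fun h ↦ ne_zero_of_mem_unit_sphere ⟨x, hx.2⟩ (hf x hx.1 h)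
  refine ⟨δ, hδ, fun x hx ↦ ?_⟩
  rcases eq_or_ne x 0 with rfl | hx0
  · simp
  obtain ⟨w, hw, hxw⟩ := C.exists_mem_sphere_eq_norm_smul hx hx0
  calc δ * ‖x‖ ≤ ‖f w‖ * ‖x‖ := by gcongr; exact hδS w hw
    _ = ‖f x‖ := by conv_rhs => rw [hxw, map_smul, norm_smul, norm_norm, mul_comm]

theorem isClosed_image [FiniteDimensional ℝ E] (C : ProperCone ℝ E) (f : E →L[ℝ] F)
    (hf : ∀ x ∈ C, f x = 0 → x = 0) : IsClosed (f '' C) := by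
  obtain ⟨δ, hδ, hδC⟩ := C.exists_pos_mul_norm_le_norm_map f hf
  refine isClosed_of_closure_subset fun y hy ↦ ?_
  set B := (C : Set E) ∩ closedBall 0 ((‖y‖ + 1) / δ)
  have hB : IsCompact B := (isCompact_closedBall _ _).inter_left C.isClosed
  have hsub : ball y 1 ∩ f '' C ⊆ f '' B := by
    rintro _ ⟨hxy, x, hx, rfl⟩
    refine ⟨x, ⟨hx, ?_⟩, rfl⟩
    rw [mem_closedBall_zero_iff, le_div_iff₀ hδ]
    linarith [hδC x hx, norm_lt_of_mem_ball hxy]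
  have hyB : y ∈ closure (f '' B) :=
    closure_mono hsub (isOpen_ball.inter_closure ⟨mem_ball_self one_pos, hy⟩)
  exact image_mono inter_subset_left ((hB.image f.continuous).isClosed.closure_subset hyB)

lemma coe_map_of_forall_map_eq_zero [FiniteDimensional ℝ E] (C : ProperCone ℝ E) (f : E →L[ℝ] F)
    (hf : ∀ x ∈ C, f x = 0 → x = 0) : (C.map f : Set F) = f '' C :=
  (C.isClosed_image f hf).closure_eq

lemma salient_map [FiniteDimensional ℝ E] (C : ProperCone ℝ E) (hC : (C : ConvexCone ℝ E).Salient)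
    (f : E →L[ℝ] F) (hf : ∀ x ∈ C, f x = 0 → x = 0) : (C.map f : ConvexCone ℝ F).Salient := by
  have hmem : ∀ y, y ∈ (C.map f : ConvexCone ℝ F) ↔ y ∈ f '' C := fun y ↦ by
    rw [← C.coe_map_of_forall_map_eq_zero f hf]; rfl
  rintro _ hy hy0 hny
  obtain ⟨a, ha, rfl⟩ := (hmem _).1 hy
  obtain ⟨b, hb, hba⟩ := (hmem _).1 hny
  have hab : a + b = 0 := hf _ (C.add_mem ha hb) (by rw [map_add, hba, add_neg_cancel])
  have ha0 : a ≠ 0 := by rintro rfl; simp at hy0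
  exact hC a ha ha0 (by rwa [← eq_neg_of_add_eq_zero_right hab])

def prodNonneg (C : ProperCone ℝ E) : ProperCone ℝ (E × ℝ) :=
  C.comap (.fst ℝ E ℝ) ⊓ (positive ℝ ℝ).comap (.snd ℝ E ℝ)

@[simp]
lemma mem_prodNonneg (C : ProperCone ℝ E) (x : E × ℝ) : x ∈ C.prodNonneg ↔ x.1 ∈ C ∧ 0 ≤ x.2 := by
  simp [prodNonneg]

lemma salient_prodNonneg (C : ProperCone ℝ E) (hC : (C : ConvexCone ℝ E).Salient) :
    (C.prodNonneg : ConvexCone ℝ (E × ℝ)).Salient := by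
  rintro ⟨z, s⟩ hzs hzs0 hnzs
  obtain ⟨hz, hs⟩ := (C.mem_prodNonneg _).1 hzs
  obtain ⟨hnz, hns⟩ := (C.mem_prodNonneg _).1 hnzs
  have hz0 : z = 0 := by_contra fun h ↦ hC z hz h hnz
  exact hzs0 (Prod.ext hz0 (le_antisymm (neg_nonneg.1 hns) hs))

section Graph

variable {Z X : Type*} [NormedAddCommGroup Z] [NormedSpace ℝ Z] [FiniteDimensional ℝ Z]
  [NormedAddCommGroup X] [NormedSpace ℝ X] [FiniteDimensional ℝ X]

lemma exists_dual_pos_on_graph (C : ProperCone ℝ Z) (hC : (C : ConvexCone ℝ Z).Salient)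
    (m : StrongDual ℝ Z) (L : Z →L[ℝ] X) (hker : ∀ z ∈ C, z ≠ 0 → L z = 0 → 0 < m z) :
    ∃ φ : StrongDual ℝ (X × ℝ), 0 < φ (0, 1) ∧ ∀ z ∈ C, z ≠ 0 → 0 < φ (L z, m z) := by
  let T : Z × ℝ →L[ℝ] X × ℝ := (L.prod m).coprod (.inr ℝ X ℝ)
  have hT : ∀ x ∈ C.prodNonneg, T x = 0 → x = 0 := by
    rintro ⟨z, s⟩ hzs hT0
    obtain ⟨hz, hs⟩ := (C.mem_prodNonneg _).1 hzs
    obtain ⟨hLz, hmzs⟩ : L z = 0 ∧ m z + s = 0 := by simpa [T, Prod.ext_iff] using hT0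
    obtain rfl : z = 0 := by
      by_contra hz0
      linarith [hker z hz hz0 hLz]
    simpa using hmzs
  obtain ⟨φ, hφ⟩ := (C.prodNonneg.map T).exists_dual_pos_of_salient
    (C.prodNonneg.salient_map (C.salient_prodNonneg hC) T hT)
  have hmem : ∀ z ∈ C, ∀ s : ℝ, 0 ≤ s → (L z, m z + s) ∈ C.prodNonneg.map T := fun z hz s hs ↦ by
    rw [← SetLike.mem_coe, C.prodNonneg.coe_map_of_forall_map_eq_zero T hT]
    exact ⟨(z, s), (C.mem_prodNonneg _).2 ⟨hz, hs⟩, by simp [T]⟩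
  refine ⟨φ, hφ _ (by simpa using hmem 0 C.zero_mem 1 zero_le_one) (by simp),
    fun z hz hz0 ↦ hφ _ (by simpa using hmem z hz 0 le_rfl) fun h ↦ ?_⟩
  rw [Prod.ext_iff] at h
  exact (hker z hz hz0 h.1).ne' h.2

theorem exists_dual_comp_sub_neg_of_pos_on_ker (C : ProperCone ℝ Z)
    (hC : (C : ConvexCone ℝ Z).Salient) (m : StrongDual ℝ Z) (L : Z →L[ℝ] X)
    (hker : ∀ z ∈ C, z ≠ 0 → L z = 0 → 0 < m z) :
    ∃ p : StrongDual ℝ X, ∀ z ∈ C, z ≠ 0 → p (L z) - m z < 0 := by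
  obtain ⟨φ, hc, hφ⟩ := C.exists_dual_pos_on_graph hC m L hker
  refine ⟨-(φ (0, 1))⁻¹ • φ.comp (.inl ℝ X ℝ), fun z hz hz0 ↦ ?_⟩
  have hsplit : φ (L z, m z) = φ (L z, 0) + m z * φ (0, 1) := by
    rw [← smul_eq_mul, ← map_smul, ← map_add]
    simp
  have hp : (-(φ (0, 1))⁻¹ • φ.comp (.inl ℝ X ℝ)) (L z) - m z
      = -((φ (0, 1))⁻¹ * φ (L z, m z)) := by
    simp only [hsplit, FunLike.coe_smul, ContinuousLinearMap.coe_comp, Pi.smul_apply,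
      Function.comp_apply, ContinuousLinearMap.inl_apply, smul_eq_mul]
    field_simp
    ring
  rw [hp]
  exact neg_neg_of_pos (mul_pos (inv_pos.2 hc) (hφ z hz hz0))

end Graph

end ProperCone

/-- Theorem: strict separation. Let `Z, X` be finite-dimensional real
normed spaces, `K ⊆ Z` a closed, convex, pointed cone, `m* ∈ Z*` and `L ∈ B(Z,X)`.
Then there exists `p* ∈ X*` with `p*(L z) - m*(z) < 0` for all nonzero `z ∈ K` if and
only if `m*(z0) > 0` for every nonzero `z0 ∈ K` with `L z0 = 0`. -/
theorem exists_functional_strict_conic_ineq_iff_pos_on_kernel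
    {Z X : Type*} [NormedAddCommGroup Z] [NormedSpace ℝ Z] [FiniteDimensional ℝ Z]
    [NormedAddCommGroup X] [NormedSpace ℝ X] [FiniteDimensional ℝ X]
    (K : Set Z) (hKcone : ∀ z ∈ K, ∀ α : ℝ, 0 ≤ α → α • z ∈ K) (hKconv : Convex ℝ K)
    (hKclosed : IsClosed K) (hKpointed : ∀ z ∈ K, -z ∈ K → z = 0)
    (mstar : Z →L[ℝ] ℝ) (L : Z →L[ℝ] X) :
    (∃ pstar : X →L[ℝ] ℝ, ∀ z ∈ K, z ≠ 0 → pstar (L z) - mstar z < 0) ↔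
      (∀ z0 ∈ K, z0 ≠ 0 → L z0 = 0 → 0 < mstar z0) := by
  refine ⟨fun ⟨p, hp⟩ z hz hz0 hLz ↦ by simpa [hLz] using hp z hz hz0, fun hker ↦ ?_⟩
  obtain rfl | ⟨z₀, hz₀⟩ := K.eq_empty_or_nonempty
  · exact ⟨0, by simp⟩
  have hK0 : (0 : Z) ∈ K := by simpa using hKcone z₀ hz₀ 0 le_rfl
  exact (ProperCone.ofSet K hK0 hKcone hKconv hKclosed).exists_dual_comp_sub_neg_of_pos_on_ker
    (fun z hz hz0 hnz ↦ hz0 (hKpointed z hz hnz)) mstar L hker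
end

section
/- Let Z and X be finite-dimensional real normed vector spaces, K ⊆ Z a convex cone, m* ∈ Z*, and L ∈ B(Z,X) such that L(K) = X. Let H be a set of piecewise continuous K-valued trajectories z : [t0,t1] → K on compact intervals such that for every z0 ∈ K with L(z0) = 0 and every compact interval [t0,t1], the constant trajectory z(t) ≡ z0 belongs to H, and suppose each z ∈ H is assigned a nonempty set H_z of L-antiderivatives of z. Then the following are equivalent: (i) there exists p* ∈ X* such that p*(L(z)) − m*(z) ≤ 0 for all z ∈ K; (ii) there exists a continuous V : X → ℝ with V(0) = 0 such that V(x(t0)) + ∫_{t0}^{t1} m*(z(t)) dt ≥ V(x(t1)) for every z ∈ H on [t0,t1] and every x ∈ H_z. -/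
/-!
If `p* ∘ L ≤ m*` on `K`, then `V = p*` is a storage function: along a trajectory,
`p*(x(t₁)) - p*(x(t₀)) = ∫ p*(L z) ≤ ∫ m*(z)`.

Conversely, feeding a storage function the constant trajectories at points of `K ∩ ker L`
(along which the state does not move) shows `m* ≥ 0` on `K ∩ ker L`. Since `L(K) = X`, we have
`ker L + K = Z`, so the Riesz extension theorem extends `m*|ker L` to a functional `g ≥ 0` on
`K`. Then `m* - g` vanishes on `ker L`, hence factors as `p* ∘ L`, and `p* ∘ L - m* = -g ≤ 0`
on `K`.
-/

open Filter Set

/-- A function `f : ℝ → E` is piecewise continuous on `[a, b]` if it is continuous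
there except possibly at finitely many points, at each of which it possesses
one-sided limits. -/
def PiecewiseContinuousOn {E : Type*} [NormedAddCommGroup E]
    (f : ℝ → E) (a b : ℝ) : Prop :=
  ∃ S : Finset ℝ, ContinuousOn f (Set.Icc a b \ S) ∧
    ∀ t ∈ S, (∃ l, Tendsto f (nhdsWithin t (Set.Iio t)) (nhds l)) ∧
      (∃ l, Tendsto f (nhdsWithin t (Set.Ioi t)) (nhds l))

open MeasureTheory Topology

section Integrability

variable {E : Type*} [NormedAddCommGroup E]

lemma isBoundedUnder_norm_nhdsWithin_diff_finset {f : ℝ → E} {s : Set ℝ} {S : Finset ℝ}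
    (hc : ContinuousOn f (s \ S))
    (hlim : ∀ t ∈ S, (∃ l, Tendsto f (𝓝[<] t) (𝓝 l)) ∧ ∃ l, Tendsto f (𝓝[>] t) (𝓝 l))
    {t : ℝ} (ht : t ∈ s) : IsBoundedUnder (· ≤ ·) (𝓝[s \ S] t) (norm ∘ f) := by
  by_cases htS : t ∈ S
  · obtain ⟨⟨l₁, h₁⟩, ⟨l₂, h₂⟩⟩ := hlim t htS
    obtain ⟨C₁, hC₁⟩ := h₁.norm.isBoundedUnder_le
    obtain ⟨C₂, hC₂⟩ := h₂.norm.isBoundedUnder_le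
    have hpunct : 𝓝[s \ S] t ≤ 𝓝[<] t ⊔ 𝓝[>] t := by
      rw [nhdsLT_sup_nhdsGT]
      exact nhdsWithin_mono _ fun u hu hut => hu.2 (hut ▸ htS)
    refine ⟨max C₁ C₂, hpunct (eventually_sup.2 ⟨?_, ?_⟩)⟩
    · exact hC₁.mono fun _ h => le_max_of_le_left h
    · exact hC₂.mono fun _ h => le_max_of_le_right h
  · exact (hc t ⟨ht, htS⟩).norm.isBoundedUnder_le

lemma PiecewiseContinuousOn.integrableOn_Icc {f : ℝ → E} {a b : ℝ}
    (h : PiecewiseContinuousOn f a b) : IntegrableOn f (Icc a b) := by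
  obtain ⟨S, hc, hlim⟩ := h
  have hS : (S : Set ℝ)ᶜ ∈ ae volume := compl_mem_ae_iff.2 (S.finite_toSet.measure_zero _)
  have hmeas : AEStronglyMeasurable f (volume.restrict (Icc a b)) := by
    rw [← Measure.restrict_congr_set (sdiff_ae_eq_self.2 ?_)]
    · exact hc.aestronglyMeasurable (measurableSet_Icc.diff S.finite_toSet.measurableSet)
    · exact measure_mono_null inter_subset_right (S.finite_toSet.measure_zero _)
  refine LocallyIntegrableOn.integrableOn_isCompact (fun t ht => ?_) isCompact_Icc
  have hbdd : IsBoundedUnder (· ≤ ·) (𝓝[Icc a b] t ⊓ ae volume) (norm ∘ f) := by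
    refine (isBoundedUnder_norm_nhdsWithin_diff_finset hc hlim ht).mono ?_
    rw [sdiff_eq, nhdsWithin_inter']
    exact inf_le_inf_left _ (le_principal_iff.2 hS)
  have hfm : StronglyMeasurableAtFilter f (𝓝[Icc a b] t ⊓ ae volume) :=
    (AEStronglyMeasurable.stronglyMeasurableAtFilter_of_mem hmeas self_mem_nhdsWithin).filter_mono
      inf_le_left
  exact ((Measure.finiteAt_nhdsWithin _ _ _).inf_of_left.integrableAtFilter hfm hbdd).of_inf_ae

lemma PiecewiseContinuousOn.intervalIntegrable {f : ℝ → E} {a b : ℝ} (hab : a ≤ b)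
    (h : PiecewiseContinuousOn f a b) : IntervalIntegrable f volume a b :=
  (intervalIntegrable_iff_integrableOn_Icc_of_le hab).2 h.integrableOn_Icc

end Integrability

lemma Convex.smul_add_smul_mem_of_smul_mem {E : Type*} [AddCommGroup E] [Module ℝ E]
    {K : Set E} (hconv : Convex ℝ K) (hcone : ∀ z ∈ K, ∀ α : ℝ, 0 ≤ α → α • z ∈ K) :
    ∀ x ∈ K, ∀ y ∈ K, ∀ a : ℝ, 0 ≤ a → ∀ b : ℝ, 0 ≤ b → a • x + b • y ∈ K := by
  intro x hx y hy a ha b hb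
  have hmid := hconv (hcone x hx a ha) (hcone y hy b hb) (by norm_num : (0 : ℝ) ≤ 1 / 2)
    (by norm_num : (0 : ℝ) ≤ 1 / 2) (by norm_num)
  simpa [smul_add, smul_smul] using hcone _ hmid 2 zero_le_two

lemma exists_comp_le_of_nonneg_on_ker {Z X : Type*} [AddCommGroup Z] [Module ℝ Z]
    [AddCommGroup X] [Module ℝ X] (K : PointedCone ℝ Z) (m : Z →ₗ[ℝ] ℝ) (L : Z →ₗ[ℝ] X)
    (hLK : ∀ x, ∃ z ∈ K, L z = x) (hm : ∀ z ∈ K, L z = 0 → 0 ≤ m z) :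
    ∃ p : X →ₗ[ℝ] ℝ, ∀ z ∈ K, p (L z) ≤ m z := by
  obtain ⟨g, hgm, hgK⟩ := riesz_extension K (m.toPMap (LinearMap.ker L))
    (fun z hz => hm z hz z.2) fun y => by
      obtain ⟨w, hwK, hLw⟩ := hLK (L y)
      exact ⟨⟨w - y, by simp [hLw]⟩, by simpa using hwK⟩
  obtain ⟨R, hR⟩ := L.exists_rightInverse_of_surjective
    (LinearMap.range_eq_top.2 fun x => (hLK x).imp fun _ h => h.2)
  refine ⟨(m - g) ∘ₗ R, fun z hz => ?_⟩
  have hker : R (L z) - z ∈ LinearMap.ker L := by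
    rw [LinearMap.mem_ker, map_sub, ← LinearMap.comp_apply, hR, LinearMap.id_apply, sub_self]
  have hagree : g (R (L z) - z) = m (R (L z) - z) := hgm ⟨_, hker⟩
  rw [map_sub, map_sub] at hagree
  simp only [LinearMap.comp_apply, LinearMap.sub_apply]
  linarith [hgK z hz]

lemma ContinuousLinearMap.intervalIntegrable_comp {E F : Type*} [NormedAddCommGroup E]
    [NormedSpace ℝ E] [NormedAddCommGroup F] [NormedSpace ℝ F] (L : E →L[ℝ] F) {f : ℝ → E}
    {μ : Measure ℝ} {a b : ℝ} (hf : IntervalIntegrable f μ a b) :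
    IntervalIntegrable (fun t => L (f t)) μ a b :=
  ⟨L.integrable_comp hf.1, L.integrable_comp hf.2⟩

lemma map_le_add_integral_of_comp_le {Z X : Type*} [NormedAddCommGroup Z] [NormedSpace ℝ Z]
    [NormedAddCommGroup X] [NormedSpace ℝ X] [CompleteSpace X] {K : Set Z}
    {p : X →L[ℝ] ℝ} {m : Z →L[ℝ] ℝ} {L : Z →L[ℝ] X} (hpK : ∀ z ∈ K, p (L z) ≤ m z)
    {z : ℝ → Z} {x : ℝ → X} {t₀ t₁ : ℝ} (hle : t₀ ≤ t₁)
    (hz : IntervalIntegrable z volume t₀ t₁) (hzK : ∀ t ∈ Icc t₀ t₁, z t ∈ K)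
    (hx : x t₁ - x t₀ = ∫ t in t₀..t₁, L (z t)) :
    p (x t₁) ≤ p (x t₀) + ∫ t in t₀..t₁, m (z t) := by
  have hLz : IntervalIntegrable (fun t => L (z t)) volume t₀ t₁ := L.intervalIntegrable_comp hz
  have hincr : p (x t₁) - p (x t₀) = ∫ t in t₀..t₁, p (L (z t)) := by
    rw [← map_sub, hx, p.intervalIntegral_comp_comm hLz]
  have hmono : ∫ t in t₀..t₁, p (L (z t)) ≤ ∫ t in t₀..t₁, m (z t) :=
    intervalIntegral.integral_mono_on hle (p.intervalIntegrable_comp hLz)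
      (m.intervalIntegrable_comp hz) fun t ht => hpK _ (hzK t ht)
  linarith

theorem exists_functional_conic_ineq_iff_storage_general
    {Z X : Type*} [NormedAddCommGroup Z] [NormedSpace ℝ Z]
    [NormedAddCommGroup X] [NormedSpace ℝ X] [FiniteDimensional ℝ X]
    (K : Set Z) (hKcone : ∀ z ∈ K, ∀ α : ℝ, 0 ≤ α → α • z ∈ K) (hKconv : Convex ℝ K)
    (mstar : Z →L[ℝ] ℝ) (L : Z →L[ℝ] X) (hLK : L '' K = Set.univ)
    (H : Set (ℝ × ℝ × (ℝ → Z)))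
    (Hx : ℝ × ℝ × (ℝ → Z) → Set (ℝ → X))
    (hH : ∀ p ∈ H, p.1 ≤ p.2.1 ∧ (∀ t ∈ Set.Icc p.1 p.2.1, p.2.2 t ∈ K) ∧
      PiecewiseContinuousOn p.2.2 p.1 p.2.1)
    (hHconst : ∀ z0 ∈ K, L z0 = 0 → ∀ t0 t1 : ℝ, t0 ≤ t1 →
      (t0, t1, fun _ : ℝ => z0) ∈ H)
    (hHx : ∀ p ∈ H, (Hx p).Nonempty ∧ ∀ x ∈ Hx p,
      ∀ s ∈ Set.Icc p.1 p.2.1, ∀ t ∈ Set.Icc p.1 p.2.1,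
        x t - x s = ∫ τ in s..t, L (p.2.2 τ)) :
    (∃ pstar : X →L[ℝ] ℝ, ∀ z ∈ K, pstar (L z) - mstar z ≤ 0) ↔
      (∃ V : X → ℝ, Continuous V ∧ V 0 = 0 ∧ ∀ p ∈ H, ∀ x ∈ Hx p,
        V (x p.2.1) ≤ V (x p.1) + ∫ t in p.1..p.2.1, mstar (p.2.2 t)) := by
  have hsurj : ∀ x, ∃ z ∈ K, L z = x := eq_univ_iff_forall.1 hLK
  constructor
  · rintro ⟨pstar, hpstar⟩
    refine ⟨pstar, pstar.continuous, map_zero pstar, fun q hq x hx => ?_⟩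
    obtain ⟨hle, hzK, hpc⟩ := hH q hq
    exact map_le_add_integral_of_comp_le (fun z hz => sub_nonpos.1 (hpstar z hz)) hle
      (hpc.intervalIntegrable hle) hzK
      ((hHx q hq).2 x hx _ (left_mem_Icc.2 hle) _ (right_mem_Icc.2 hle))
  · rintro ⟨V, -, -, hV⟩
    have hker : ∀ z ∈ K, L z = 0 → 0 ≤ mstar z := by
      intro z hz hLz
      have hq := hHconst z hz hLz 0 1 zero_le_one
      obtain ⟨⟨x, hx⟩, hanti⟩ := hHx _ hq
      have hstill : x 1 = x 0 := by
        simpa [hLz, sub_eq_zero] using hanti x hx 0 (by simp) 1 (by simp)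
      simpa [hstill] using hV _ hq x hx
    obtain ⟨z₀, hz₀, -⟩ := hsurj 0
    let C : PointedCone ℝ Z := .ofConeComb K ⟨z₀, hz₀⟩
      (hKconv.smul_add_smul_mem_of_smul_mem hKcone)
    obtain ⟨p, hp⟩ := exists_comp_le_of_nonneg_on_ker C mstar (L : Z →ₗ[ℝ] X) hsurj hker
    exact ⟨LinearMap.toContinuousLinearMap p, fun z hz => sub_nonpos.2 (hp z hz)⟩

/-- Corollary, conditions (i) ⇔ (ii). Here a trajectory is encoded as a
triple `p = (t0, t1, z)` with `z : ℝ → Z` considered on the compact interval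
`[t0, t1]`; `H` is a set of such triples, all piecewise continuous and `K`-valued,
containing all constant trajectories at kernel points of `L`, and `Hx p` is a
nonempty set of `L`-antiderivatives of `p`. -/
theorem exists_functional_conic_ineq_iff_storage
    {Z X : Type*} [NormedAddCommGroup Z] [NormedSpace ℝ Z] [FiniteDimensional ℝ Z]
    [NormedAddCommGroup X] [NormedSpace ℝ X] [FiniteDimensional ℝ X]
    (K : Set Z) (hKcone : ∀ z ∈ K, ∀ α : ℝ, 0 ≤ α → α • z ∈ K) (hKconv : Convex ℝ K)
    (mstar : Z →L[ℝ] ℝ) (L : Z →L[ℝ] X) (hLK : L '' K = Set.univ)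
    (H : Set (ℝ × ℝ × (ℝ → Z)))
    (Hx : ℝ × ℝ × (ℝ → Z) → Set (ℝ → X))
    (hH : ∀ p ∈ H, p.1 ≤ p.2.1 ∧ (∀ t ∈ Set.Icc p.1 p.2.1, p.2.2 t ∈ K) ∧
      PiecewiseContinuousOn p.2.2 p.1 p.2.1)
    (hHconst : ∀ z0 ∈ K, L z0 = 0 → ∀ t0 t1 : ℝ, t0 ≤ t1 →
      (t0, t1, fun _ : ℝ => z0) ∈ H)
    (hHx : ∀ p ∈ H, (Hx p).Nonempty ∧ ∀ x ∈ Hx p,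
      ∀ s ∈ Set.Icc p.1 p.2.1, ∀ t ∈ Set.Icc p.1 p.2.1,
        x t - x s = ∫ τ in s..t, L (p.2.2 τ)) :
    (∃ pstar : X →L[ℝ] ℝ, ∀ z ∈ K, pstar (L z) - mstar z ≤ 0) ↔
      (∃ V : X → ℝ, Continuous V ∧ V 0 = 0 ∧ ∀ p ∈ H, ∀ x ∈ Hx p,
        V (x p.2.1) ≤ V (x p.1) + ∫ t in p.1..p.2.1, mstar (p.2.2 t)) :=
  exists_functional_conic_ineq_iff_storage_general K hKcone hKconv mstar L hLK H Hx hH hHconst hHx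
end

section
/- Let Z and X be finite-dimensional real normed vector spaces, K ⊆ Z a convex cone, m* ∈ Z*, and L ∈ B(Z,X) such that L(K) = X. Let H be a set of piecewise continuous K-valued trajectories z : [t0,t1] → K on compact intervals such that: (a) for every z0 ∈ K with L(z0) = 0 and every compact interval [t0,t1], the constant trajectory z(t) ≡ z0 belongs to H; and (b) every z ∈ H admits an L-antiderivative x with x(t0) = x(t1). Then the following are equivalent: (i) there exists p* ∈ X* such that p*(L(z)) − m*(z) ≤ 0 for all z ∈ K; (iii) ∫_{t0}^{t1} m*(z(t)) dt ≥ 0 for every z ∈ H. -/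
/-!
(i) ⇒ (iii): if `p* ∘ L ≤ m*` on `K`, then `∫ m*(z) ≥ ∫ p*(L z) = p*(x t₁ - x t₀) = 0`.

(iii) ⇒ (i): constant trajectories at points of `K ∩ ker L` show `m* ≥ 0` there. Together with
`L(K) = X` this makes `N x = inf {m* z | z ∈ K, L z = x}` finite, and since `K` is a convex
cone `N` is sublinear; Hahn–Banach yields a linear `p* ≤ N`, i.e. `p*(L z) ≤ m* z` on `K`.
-/

open Filter Set

open MeasureTheory Bornology Topology Pointwise

theorem IsCompact.isBounded_image_of_forall_mem_nhdsWithin {X Y : Type*} [TopologicalSpace X]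
    [Bornology Y] {s : Set X} (hs : IsCompact s) {f : X → Y} (hf : ∀ x ∈ s, ∃ t ∈ 𝓝[s] x, IsBounded (f '' t)) : IsBounded (f '' s) :=
  hs.induction_on (p := fun t => IsBounded (f '' t)) (by simp)
    (fun _ _ hst ht => ht.subset (image_mono hst))
    (fun _ _ hs ht => by simpa only [image_union] using hs.union ht) hf

namespace PiecewiseContinuousOn

variable {E : Type*} [NormedAddCommGroup E] {f : ℝ → E} {a b : ℝ}

theorem exists_mem_nhdsWithin_isBounded_image (hf : PiecewiseContinuousOn f a b)
    {x : ℝ} (hx : x ∈ Icc a b) : ∃ t ∈ 𝓝[Icc a b] x, IsBounded (f '' t) := by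
  obtain ⟨S, hcont, hlim⟩ := hf
  by_cases hxS : x ∈ S
  · obtain ⟨⟨l₁, h₁⟩, l₂, h₂⟩ := hlim x hxS
    obtain ⟨t₁, ht₁, hb₁⟩ := Metric.exists_isBounded_image_of_tendsto h₁
    obtain ⟨t₂, ht₂, hb₂⟩ := Metric.exists_isBounded_image_of_tendsto h₂
    refine ⟨insert x (t₁ ∪ t₂), mem_nhdsWithin_of_mem_nhds ?_, ?_⟩
    · rw [← nhdsNE_sup_pure, ← nhdsLT_sup_nhdsGT]
      exact ⟨⟨mem_of_superset ht₁ (by grind), mem_of_superset ht₂ (by grind)⟩, by simp⟩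
    · rw [image_insert_eq, image_union]
      exact (hb₁.union hb₂).insert _
  · have hS : ContinuousWithinAt f S x :=
      continuousWithinAt_of_notMem_closure (by rwa [S.finite_toSet.isClosed.closure_eq])
    exact Metric.exists_isBounded_image_of_tendsto (hS.sdiff_iff.mp (hcont x ⟨hx, hxS⟩))

theorem isBounded_image (hf : PiecewiseContinuousOn f a b) : IsBounded (f '' Icc a b) :=
  isCompact_Icc.isBounded_image_of_forall_mem_nhdsWithin
    fun _ hx => hf.exists_mem_nhdsWithin_isBounded_image hx

theorem integrableOn (hf : PiecewiseContinuousOn f a b) : IntegrableOn f (Icc a b) := by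
  obtain ⟨C, hC⟩ := isBounded_iff_forall_norm_le.mp hf.isBounded_image
  obtain ⟨S, hcont, -⟩ := hf
  have hS : Icc a b \ (S : Set ℝ) =ᵐ[volume] Icc a b :=
    sdiff_ae_eq_self.mpr (measure_mono_null inter_subset_right (S.finite_toSet.measure_zero _))
  refine IntegrableOn.of_bound measure_Icc_lt_top ?_ C
    (ae_restrict_of_forall_mem measurableSet_Icc fun t ht => hC _ (mem_image_of_mem f ht))
  rw [← Measure.restrict_congr_set hS]
  exact hcont.aestronglyMeasurable (measurableSet_Icc.diff S.finite_toSet.measurableSet)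

theorem intervalIntegrable_s4 (hf : PiecewiseContinuousOn f a b) (hab : a ≤ b) :
    IntervalIntegrable f volume a b :=
  (intervalIntegrable_iff_integrableOn_Icc_of_le hab).mpr hf.integrableOn

end PiecewiseContinuousOn

theorem intervalIntegral_nonneg_of_comp_le {Z X : Type*} [NormedAddCommGroup Z]
    [NormedSpace ℝ Z] [CompleteSpace Z] [NormedAddCommGroup X] [NormedSpace ℝ X]
    [CompleteSpace X]
    {z : ℝ → Z} {a b : ℝ} (hab : a ≤ b) (hz : IntervalIntegrable z volume a b)
    (m : Z →L[ℝ] ℝ) (L : Z →L[ℝ] X) (p : X →L[ℝ] ℝ) (hL : ∫ t in a..b, L (z t) = 0)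
    (hle : ∀ t ∈ Icc a b, p (L (z t)) ≤ m (z t)) : 0 ≤ ∫ t in a..b, m (z t) := by
  have hpL : ∫ t in a..b, m (z t) = ∫ t in a..b, (m - p.comp L) (z t) := by
    rw [(m - p.comp L).intervalIntegral_comp_comm hz, m.intervalIntegral_comp_comm hz,
      sub_apply, ContinuousLinearMap.comp_apply,
      ← L.intervalIntegral_comp_comm hz, hL, map_zero, sub_zero]
  rw [hpL]
  exact intervalIntegral.integral_nonneg hab fun t ht => sub_nonneg.mpr (hle t ht)

theorem ConvexCone.coe_hull_eq_self_of_convex {𝕜 M : Type*} [Field 𝕜] [LinearOrder 𝕜]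
    [IsStrictOrderedRing 𝕜] [AddCommGroup M] [Module 𝕜 M] {s : Set M} (hs : Convex 𝕜 s)
    (hsmul : ∀ x ∈ s, ∀ c : 𝕜, 0 < c → c • x ∈ s) : (hull 𝕜 s : Set M) = s := by
  refine subset_hull.antisymm' fun x hx => ?_
  obtain ⟨c, hc, y, hy, rfl⟩ := (mem_hull_of_convex hs).mp hx
  exact hsmul y hy c hc

namespace ConvexCone

variable {Z X : Type*} [AddCommGroup Z] [Module ℝ Z] [AddCommGroup X] [Module ℝ X]
  (C : ConvexCone ℝ Z) (m : Z →ₗ[ℝ] ℝ) (L : Z →ₗ[ℝ] X)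

def fiberValues (x : X) : Set ℝ := m '' ((C : Set Z) ∩ L ⁻¹' {x})

/-- The value function of the conic program `min {m z | z ∈ C, L z = x}`. Outside the hypotheses
of the lemmas below the fibre values may be empty or unbounded and `sInf` returns the junk `0`. -/
noncomputable def fiberInf (x : X) : ℝ := sInf (C.fiberValues m L x)

variable {C m L}

theorem fiberValues_nonempty (hLC : L '' C = univ) (x : X) : (C.fiberValues m L x).Nonempty := by
  obtain ⟨z, hz, rfl⟩ := hLC.symm ▸ mem_univ x
  exact ⟨m z, z, ⟨hz, rfl⟩, rfl⟩

theorem fiberValues_bddBelow (hLC : L '' C = univ) (hm : ∀ z ∈ C, L z = 0 → 0 ≤ m z) (x : X) :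
    BddBelow (C.fiberValues m L x) := by
  obtain ⟨w, hw, hwx⟩ := hLC.symm ▸ mem_univ (-x)
  refine ⟨-m w, ?_⟩
  rintro _ ⟨z, ⟨hz, hzx⟩, rfl⟩
  have hzw := hm (z + w) (C.add_mem hz hw) (by simp_all)
  rw [map_add] at hzw
  linarith

theorem fiberValues_add_subset (x y : X) :
    C.fiberValues m L x + C.fiberValues m L y ⊆ C.fiberValues m L (x + y) := by
  rintro _ ⟨_, ⟨z, ⟨hz, hzx⟩, rfl⟩, _, ⟨w, ⟨hw, hwy⟩, rfl⟩, rfl⟩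
  exact ⟨z + w, ⟨C.add_mem hz hw, by simp_all⟩, map_add m z w⟩

theorem fiberValues_smul {c : ℝ} (hc : 0 < c) (x : X) :
    C.fiberValues m L (c • x) = c • C.fiberValues m L x := by
  have : (C : Set Z) ∩ L ⁻¹' {c • x} = c • ((C : Set Z) ∩ L ⁻¹' {x}) := by
    ext z
    rw [mem_smul_set_iff_inv_smul_mem₀ hc.ne']
    simp [C.smul_mem_iff (inv_pos.mpr hc), inv_smul_eq_iff₀ hc.ne']
  rw [fiberValues, this, image_smul_set]
  rfl

theorem fiberInf_le {z : Z} (hLC : L '' C = univ) (hm : ∀ z ∈ C, L z = 0 → 0 ≤ m z)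
    (hz : z ∈ C) : C.fiberInf m L (L z) ≤ m z :=
  csInf_le (fiberValues_bddBelow hLC hm _) ⟨z, ⟨hz, rfl⟩, rfl⟩

theorem fiberInf_add_le (hLC : L '' C = univ) (hm : ∀ z ∈ C, L z = 0 → 0 ≤ m z) (x y : X) :
    C.fiberInf m L (x + y) ≤ C.fiberInf m L x + C.fiberInf m L y := by
  rw [fiberInf, fiberInf, fiberInf, ← csInf_add (fiberValues_nonempty hLC x)
    (fiberValues_bddBelow hLC hm x) (fiberValues_nonempty hLC y) (fiberValues_bddBelow hLC hm y)]
  exact csInf_le_csInf (fiberValues_bddBelow hLC hm _)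
    ((fiberValues_nonempty hLC x).add (fiberValues_nonempty hLC y)) (fiberValues_add_subset x y)

theorem fiberInf_smul {c : ℝ} (hc : 0 < c) (x : X) :
    C.fiberInf m L (c • x) = c * C.fiberInf m L x := by
  rw [fiberInf, fiberValues_smul hc, Real.sInf_smul_of_nonneg hc.le, smul_eq_mul, fiberInf]

theorem fiberInf_zero : C.fiberInf m L 0 = 0 := by
  have h := fiberInf_smul (C := C) (m := m) (L := L) two_pos 0
  rw [smul_zero] at h
  linarith

theorem exists_linearMap_comp_le (hLC : L '' C = univ) (hm : ∀ z ∈ C, L z = 0 → 0 ≤ m z) :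
    ∃ p : X →ₗ[ℝ] ℝ, ∀ z ∈ C, p (L z) ≤ m z := by
  obtain ⟨p, -, hp⟩ := exists_extension_of_le_sublinear ⊥ (C.fiberInf m L)
    (fun _ => fiberInf_smul) (fiberInf_add_le hLC hm) fun ⟨x, hx⟩ => by
      obtain rfl := (Submodule.mem_bot ℝ).mp hx
      exact (LinearPMap.map_zero _).trans_le fiberInf_zero.ge
  exact ⟨p, fun z hz => (hp (L z)).trans (fiberInf_le hLC hm hz)⟩

end ConvexCone

/-- Corollary, conditions (i) ⇔ (iii). A trajectory is encoded as a
triple `p = (t0, t1, z)` with `z : ℝ → Z` considered on the compact interval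
`[t0, t1]`; `H` is a set of such triples, all piecewise continuous and `K`-valued,
containing all constant trajectories at kernel points of `L`, where every member of
`H` admits an `L`-antiderivative with equal endpoint values. Then the conic
inequality is solvable iff `∫ m*(z) ≥ 0` along every trajectory of `H`. -/
theorem exists_functional_conic_ineq_iff_integral_nonneg
    {Z X : Type*} [NormedAddCommGroup Z] [NormedSpace ℝ Z] [FiniteDimensional ℝ Z]
    [NormedAddCommGroup X] [NormedSpace ℝ X] [FiniteDimensional ℝ X]
    (K : Set Z) (hKcone : ∀ z ∈ K, ∀ α : ℝ, 0 ≤ α → α • z ∈ K) (hKconv : Convex ℝ K)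
    (mstar : Z →L[ℝ] ℝ) (L : Z →L[ℝ] X) (hLK : L '' K = Set.univ)
    (H : Set (ℝ × ℝ × (ℝ → Z)))
    (hH : ∀ p ∈ H, p.1 ≤ p.2.1 ∧ (∀ t ∈ Set.Icc p.1 p.2.1, p.2.2 t ∈ K) ∧
      PiecewiseContinuousOn p.2.2 p.1 p.2.1)
    (hHconst : ∀ z0 ∈ K, L z0 = 0 → ∀ t0 t1 : ℝ, t0 ≤ t1 →
      (t0, t1, fun _ : ℝ => z0) ∈ H)
    (hHret : ∀ p ∈ H, ∃ x : ℝ → X,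
      (∀ s ∈ Set.Icc p.1 p.2.1, ∀ t ∈ Set.Icc p.1 p.2.1,
        x t - x s = ∫ τ in s..t, L (p.2.2 τ)) ∧ x p.1 = x p.2.1) :
    (∃ pstar : X →L[ℝ] ℝ, ∀ z ∈ K, pstar (L z) - mstar z ≤ 0) ↔
      (∀ p ∈ H, 0 ≤ ∫ t in p.1..p.2.1, mstar (p.2.2 t)) := by
  have hK : (ConvexCone.hull ℝ K : Set Z) = K :=
    ConvexCone.coe_hull_eq_self_of_convex hKconv fun z hz c hc => hKcone z hz c hc.le
  have hmemK : ∀ z, z ∈ ConvexCone.hull ℝ K ↔ z ∈ K := fun z => by rw [← SetLike.mem_coe, hK]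
  constructor
  · rintro ⟨pstar, hpstar⟩ p hp
    obtain ⟨hle, hpK, hpc⟩ := hH p hp
    obtain ⟨x, hx, hloop⟩ := hHret p hp
    refine intervalIntegral_nonneg_of_comp_le hle (hpc.intervalIntegrable_s4 hle) mstar L pstar ?_
      fun t ht => sub_nonpos.mp (hpstar _ (hpK t ht))
    rw [← hx _ (left_mem_Icc.mpr hle) _ (right_mem_Icc.mpr hle), hloop, sub_self]
  · intro hint
    have hm : ∀ z ∈ K, L z = 0 → 0 ≤ mstar z := fun z hz hLz => by
      simpa using hint _ (hHconst z hz hLz 0 1 zero_le_one)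
    obtain ⟨p, hp⟩ := ConvexCone.exists_linearMap_comp_le (C := ConvexCone.hull ℝ K)
      (m := mstar) (L := L) (by rwa [hK]) fun z hz => hm z ((hmemK z).mp hz)
    exact ⟨LinearMap.toContinuousLinearMap p, fun z hz => sub_nonpos.mpr (hp z ((hmemK z).mpr hz))⟩
end

section
/- Let Z and X be finite-dimensional real normed vector spaces, K ⊆ Z a convex cone, and E, L ∈ B(Z,X). If the pair (E,L) is controllable on K and E(K) has nonempty interior in X, then L(K) = X, i.e., the image of K under L is all of X. -/
open Filter Set

/-- The pair `(E, L)` is controllable on the cone `K`: for all `x0, x1 ∈ E(K)` there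
are `t1 ≥ 0` and a continuous `K`-valued `z` on `[0, t1]` with `d/dt E(z) = L(z)`
(in integral form), `E(z(0)) = x0` and `E(z(t1)) = x1`. -/
def ControllableOn {Z X : Type*} [NormedAddCommGroup Z] [NormedSpace ℝ Z]
    [NormedAddCommGroup X] [NormedSpace ℝ X]
    (E L : Z →L[ℝ] X) (K : Set Z) : Prop :=
  ∀ x0 ∈ E '' K, ∀ x1 ∈ E '' K, ∃ t1 : ℝ, 0 ≤ t1 ∧ ∃ z : ℝ → Z,
    ContinuousOn z (Set.Icc 0 t1) ∧ (∀ t ∈ Set.Icc 0 t1, z t ∈ K) ∧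
    (∀ s ∈ Set.Icc 0 t1, ∀ t ∈ Set.Icc 0 t1,
      E (z t) - E (z s) = ∫ τ in s..t, L (z τ)) ∧
    E (z 0) = x0 ∧ E (z t1) = x1

/-- If `(E, L)` is controllable on the convex cone `K` and `E(K)`
has nonempty interior, then `L(K) = X`. -/
theorem image_cone_eq_univ_of_controllableOn
    {Z X : Type*} [NormedAddCommGroup Z] [NormedSpace ℝ Z] [FiniteDimensional ℝ Z]
    [NormedAddCommGroup X] [NormedSpace ℝ X] [FiniteDimensional ℝ X]
    (K : Set Z) (hKcone : ∀ z ∈ K, ∀ α : ℝ, 0 ≤ α → α • z ∈ K) (hKconv : Convex ℝ K)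
    (E L : Z →L[ℝ] X) (hctrl : ControllableOn E L K)
    (hint : (interior (E '' K)).Nonempty) :
    L '' K = Set.univ := by
  classical
  by_contra hne
  obtain ⟨a, ha⟩ := hint
  have haE : a ∈ E '' K := interior_subset ha
  obtain ⟨z0, hz0K, -⟩ := haE
  have hK0 : (0 : Z) ∈ K := by simpa using hKcone z0 hz0K 0 le_rfl
  have hconv : Convex ℝ (L '' K) := by
    simpa using hKconv.linear_image (L : Z →ₗ[ℝ] X)
  -- If the closure of `L '' K` were everything, then `L '' K` would be everything.
  have hclne : closure (L '' K) ≠ Set.univ := by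
    intro hcl
    apply hne
    have hspan : affineSpan ℝ (L '' K) = ⊤ := by
      have hcls : closure (L '' K) ⊆ (affineSpan ℝ (L '' K) : Set X) :=
        closure_minimal (subset_affineSpan ℝ _)
          (affineSpan ℝ (L '' K)).closed_of_finiteDimensional
      rw [hcl] at hcls
      refine (AffineSubspace.ext_iff _ _).mpr ?_
      rw [AffineSubspace.top_coe]
      exact Set.eq_univ_of_univ_subset hcls
    obtain ⟨b, hb⟩ := hconv.interior_nonempty_iff_affineSpan_eq_top.mpr hspan
    -- every point `p` lies in `L '' K`
    apply Set.eq_univ_of_forall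
    intro p
    have hx : (2 : ℝ) • p - b ∈ closure (L '' K) := by rw [hcl]; trivial
    have := hconv.add_smul_sub_mem_interior' hx hb
      (t := (1 : ℝ) / 2) (by constructor <;> norm_num)
    have hp : ((2 : ℝ) • p - b) + (1 / 2 : ℝ) • (b - ((2 : ℝ) • p - b)) = p := by
      module
    rw [hp] at this
    exact interior_subset this
  obtain ⟨y, hy⟩ : ∃ y, y ∉ closure (L '' K) := by
    by_contra h
    push_neg at h
    exact hclne (Set.eq_univ_of_forall h)
  obtain ⟨φ, u, hφs, hφy⟩ :=
    geometric_hahn_banach_closed_point hconv.closure isClosed_closure hy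
  have hu0 : (0 : ℝ) < u := by
    have h0 : (0 : X) ∈ closure (L '' K) :=
      subset_closure ⟨0, hK0, by simp⟩
    simpa using hφs 0 h0
  -- φ is nonpositive on L '' K
  have hφle : ∀ z ∈ K, φ (L z) ≤ 0 := by
    intro z hz
    by_contra hpos
    push_neg at hpos
    set α : ℝ := u / φ (L z) with hα
    have hα0 : 0 ≤ α := le_of_lt (div_pos hu0 hpos)
    have hmem : L (α • z) ∈ closure (L '' K) :=
      subset_closure ⟨α • z, hKcone z hz α hα0, rfl⟩
    have := hφs _ hmem
    rw [map_smul, map_smul] at this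
    have : α * φ (L z) < u := this
    rw [hα, div_mul_cancel₀ _ (ne_of_gt hpos)] at this
    exact lt_irrefl u this
  -- φ ∘ E is "nonincreasing" between reachable points
  have hmono : ∀ x0 ∈ E '' K, ∀ x1 ∈ E '' K, φ x1 ≤ φ x0 := by
    intro x0 hx0 x1 hx1
    obtain ⟨t1, ht1, z, hzc, hzK, hode, hz0, hz1⟩ := hctrl x0 hx0 x1 hx1
    have hI : IntervalIntegrable (fun τ => L (z τ)) MeasureTheory.volume 0 t1 := by
      apply ContinuousOn.intervalIntegrable
      rw [Set.uIcc_of_le ht1]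
      exact L.continuous.comp_continuousOn hzc
    have key : E (z t1) - E (z 0) = ∫ τ in (0:ℝ)..t1, L (z τ) :=
      hode 0 ⟨le_rfl, ht1⟩ t1 ⟨ht1, le_rfl⟩
    have h1 : φ (E (z t1)) - φ (E (z 0)) = ∫ τ in (0:ℝ)..t1, φ (L (z τ)) := by
      rw [← map_sub, key, ← φ.intervalIntegral_comp_comm hI]
    have h2 : (∫ τ in (0:ℝ)..t1, φ (L (z τ))) ≤ 0 := by
      have hnn : (0:ℝ) ≤ ∫ τ in (0:ℝ)..t1, -(φ (L (z τ))) := by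
        apply intervalIntegral.integral_nonneg ht1
        intro τ hτ
        simpa using hφle (z τ) (hzK τ hτ)
      rw [intervalIntegral.integral_neg] at hnn
      linarith
    rw [hz0, hz1] at h1
    linarith
  -- hence φ is constant on E '' K, which has nonempty interior, so φ = 0
  have hφ0 : ∀ v : X, φ v = 0 := by
    obtain ⟨ε, hε, hball⟩ := Metric.isOpen_iff.mp isOpen_interior a ha
    intro v
    rcases eq_or_ne v 0 with rfl | hv
    · simp
    have hnv : 0 < ‖v‖ := norm_pos_iff.mpr hv
    set δ : ℝ := ε / (2 * ‖v‖) with hδ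
    have hδ0 : 0 < δ := div_pos hε (mul_pos two_pos hnv)
    have hmem : a + δ • v ∈ E '' K := by
      apply interior_subset
      apply hball
      simp only [Metric.mem_ball, dist_eq_norm]
      rw [add_sub_cancel_left, norm_smul, Real.norm_eq_abs, abs_of_pos hδ0, hδ]
      rw [div_mul_eq_mul_div, mul_comm]
      rw [div_lt_iff₀ (mul_pos two_pos hnv)]
      nlinarith
    have haE' : a ∈ E '' K := interior_subset ha
    have h1 := hmono a haE' (a + δ • v) hmem
    have h2 := hmono (a + δ • v) hmem a haE'
    have : φ (a + δ • v) = φ a := le_antisymm h1 h2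
    rw [map_add, map_smul] at this
    have hδv : δ * φ v = 0 := by simpa using this
    rcases mul_eq_zero.mp hδv with h | h
    · exact absurd h (ne_of_gt hδ0)
    · exact h
  have := hφ0 y
  linarith [hφy, hu0]
end

section
/- Let A ∈ ℝ^{n×n} be Metzler and Hurwitz, and let B ∈ ℝ^{n×m} be entrywise nonnegative with Bu0 entrywise strictly positive for some entrywise nonnegative u0 ∈ ℝ^m. Then for every y ∈ ℝ^n there exist an entrywise nonnegative x ∈ ℝ^n and an entrywise nonnegative u ∈ ℝ^m such that Ax + Bu = y; that is, the image of the nonnegative orthant ℝ_+^{n+m} under the map (x,u) ↦ Ax + Bu is all of ℝ^n. -/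
/-!
For a Metzler matrix `A` and small `t > 0`, the matrix `P = 1 + t • A` is entrywise nonnegative,
and if `A` is Hurwitz its eigenvalues `1 + t μ` lie in the open unit disc, so `P ^ N → 0` by
Gelfand's formula. Hence `A x ≤ 0`, i.e. `P x ≤ x`, gives `x ≥ P ^ N x → 0`: the matrix `-A` is
inverse-positive. Given `y`, choose `T ≥ 0` with `y ≤ T • B u₀`; as `A` is invertible, the solution
of `A x = y - T • B u₀ ≤ 0` is nonnegative, and `(x, T • u₀)` is the required preimage of `y`.
-/

open Filter Topology

theorem spectrum.one_add_smul_eq {𝕜 A : Type*} [Field 𝕜] [Ring A] [Algebra 𝕜 A] (a : A)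
    {c : 𝕜} (hc : c ≠ 0) :
    spectrum 𝕜 (1 + c • a) = (fun μ => 1 + c * μ) '' spectrum 𝕜 a := by
  rw [← map_one (algebraMap 𝕜 A), ← spectrum.singleton_add_eq,
    show c • a = Units.mk0 c hc • a from rfl, spectrum.unit_smul_eq_smul, Set.singleton_add,
    ← Set.image_smul, Set.image_image]
  rfl

theorem spectrum.tendsto_pow_nhds_zero_of_spectralRadius_lt_one {A : Type*} [NormedRing A]
    [NormedAlgebra ℂ A] [CompleteSpace A] {a : A} (ha : spectralRadius ℂ a < 1) :
    Tendsto (a ^ ·) atTop (𝓝 0) := by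
  obtain ⟨r, hr, hr1⟩ := ENNReal.lt_iff_exists_nnreal_btwn.1 ha
  have hlt : ∀ᶠ N : ℕ in atTop, ‖a ^ N‖₊ < r ^ N := by
    filter_upwards [(pow_nnnorm_pow_one_div_tendsto_nhds_spectralRadius a).eventually
      (gt_mem_nhds hr), eventually_gt_atTop 0] with N hN hN0
    rw [one_div, ENNReal.rpow_inv_lt_iff (by positivity), ENNReal.rpow_natCast] at hN
    exact_mod_cast hN
  refine squeeze_zero_norm' ?_ (tendsto_pow_atTop_nhds_zero_of_lt_one r.2 (by exact_mod_cast hr1))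
  filter_upwards [hlt] with N hN
  exact_mod_cast hN.le

theorem Complex.eventually_norm_one_add_mul_lt_one {μ : ℂ} (hμ : μ.re < 0) :
    ∀ᶠ t : ℝ in 𝓝[>] 0, ‖1 + t * μ‖ < 1 := by
  have hμ0 : 0 < normSq μ := normSq_pos.2 fun h => by simp [h] at hμ
  filter_upwards [Ioo_mem_nhdsGT (show (0 : ℝ) < -2 * μ.re / normSq μ by
    exact div_pos (by linarith) hμ0)] with t ⟨ht0, ht⟩
  rw [lt_div_iff₀ hμ0] at ht
  have hsq : ‖1 + t * μ‖ ^ 2 = 1 + t * (2 * μ.re + t * normSq μ) := by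
    rw [Complex.sq_norm, normSq_apply, normSq_apply]
    simp only [add_re, one_re, mul_re, ofReal_re, ofReal_im, zero_mul, sub_zero, add_im, one_im,
      mul_im, add_zero, zero_add]
    ring
  rw [← sq_lt_one_iff₀ (norm_nonneg _), hsq]
  nlinarith

theorem exists_nonneg_le_smul_of_forall_pos {ι : Type*} [Finite ι] {w : ι → ℝ}
    (hw : ∀ i, 0 < w i) (y : ι → ℝ) : ∃ T : ℝ, 0 ≤ T ∧ y ≤ T • w :=
  ((eventually_ge_atTop 0).and <| eventually_all.2 fun i =>
    (tendsto_id.atTop_mul_const (hw i)).eventually_ge_atTop (y i)).exists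

namespace Matrix

section Order

variable {n R : Type*} [Fintype n] [Semiring R] [PartialOrder R] [IsOrderedRing R]

theorem mulVec_mono_of_nonneg {m : Type*} {P : Matrix m n R} (hP : ∀ i j, 0 ≤ P i j) :
    Monotone (P *ᵥ ·) := fun x y hxy i => by
  simp only [mulVec, dotProduct]
  gcongr with j
  exacts [hP i j, hxy j]

variable [DecidableEq n] [TopologicalSpace R] [IsTopologicalSemiring R] [OrderClosedTopology R]

theorem nonneg_of_mulVec_le_of_tendsto_pow {P : Matrix n n R} (hP : ∀ i j, 0 ≤ P i j)
    (hPow : Tendsto (P ^ ·) atTop (𝓝 0)) {x : n → R} (hx : P *ᵥ x ≤ x) : 0 ≤ x := by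
  have hle : ∀ N : ℕ, P ^ N *ᵥ x ≤ x := by
    intro N
    induction N with
    | zero => simp
    | succ N ih =>
      rw [pow_succ', ← mulVec_mulVec]
      exact (mulVec_mono_of_nonneg hP ih).trans hx
  have hlim : Tendsto (fun N : ℕ => P ^ N *ᵥ x) atTop (𝓝 0) := by
    simpa [Function.comp_def] using
      ((continuous_id.matrix_mulVec continuous_const).tendsto 0).comp hPow
  exact le_of_tendsto' hlim hle

end Order

variable {n : Type*} [Fintype n] [DecidableEq n]

theorem tendsto_pow_nhds_zero_of_forall_norm_lt_one {P : Matrix n n ℝ}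
    (hP : ∀ z ∈ spectrum ℂ (P.map (Complex.ofReal ·)), ‖z‖ < 1) :
    Tendsto (P ^ ·) atTop (𝓝 0) := by
  rcases isEmpty_or_nonempty n with hn | hn
  · exact tendsto_const_nhds.congr fun N => Subsingleton.elim _ _
  -- Any submultiplicative norm makes Gelfand's formula available; the limit does not depend on it.
  let := Matrix.linftyOpNormedRing (n := n) (α := ℂ)
  let := Matrix.linftyOpNormedAlgebra (n := n) (R := ℂ) (α := ℂ)
  have hc : Tendsto (P.map (Complex.ofReal ·) ^ ·) atTop (𝓝 0) :=
    spectrum.tendsto_pow_nhds_zero_of_spectralRadius_lt_one <|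
      spectrum.spectralRadius_lt_of_forall_lt _ fun z hz => by exact_mod_cast hP z hz
  have hre : Continuous fun M : Matrix n n ℂ => M.map Complex.re :=
    continuous_id.matrix_map Complex.continuous_re
  have hpow : ∀ N : ℕ, (P.map (Complex.ofReal ·) ^ N).map Complex.re = P ^ N := fun N => by
    change (P.map Complex.ofRealHom ^ N).map Complex.re = P ^ N
    rw [← Matrix.map_pow, Matrix.map_map]
    ext
    simp
  simpa [Function.comp_def, hpow] using (hre.tendsto 0).comp hc

def IsMetzler (A : Matrix n n ℝ) : Prop := ∀ i j, i ≠ j → 0 ≤ A i j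

def IsHurwitz (A : Matrix n n ℝ) : Prop := ∀ μ ∈ spectrum ℂ (A.map (Complex.ofReal ·)), μ.re < 0

variable {A : Matrix n n ℝ}

theorem IsMetzler.eventually_nonneg_one_add_smul (hA : A.IsMetzler) :
    ∀ᶠ t : ℝ in 𝓝[>] 0, ∀ i j, 0 ≤ (1 + t • A) i j := by
  simp only [eventually_all]
  intro i j
  rcases eq_or_ne i j with rfl | hij
  · have hcont : Continuous fun t : ℝ => 1 + t * A i i := by fun_prop
    filter_upwards [nhdsWithin_le_nhds <|
      continuousAt_const.eventually_lt hcont.continuousAt (by simp : (0 : ℝ) < 1 + 0 * A i i)]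
      with t ht
    simpa using ht.le
  · filter_upwards [self_mem_nhdsWithin] with t (ht : 0 < t)
    simpa [one_apply_ne hij] using mul_nonneg ht.le (hA i j hij)

theorem IsHurwitz.eventually_norm_lt_one_of_mem_spectrum_one_add_smul (hA : A.IsHurwitz) :
    ∀ᶠ t : ℝ in 𝓝[>] 0, ∀ z ∈ spectrum ℂ ((1 + t • A).map (Complex.ofReal ·)), ‖z‖ < 1 := by
  filter_upwards [(finite_spectrum _).eventually_all.2 fun μ hμ =>
    Complex.eventually_norm_one_add_mul_lt_one (hA μ hμ), self_mem_nhdsWithin]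
    with t ht (ht0 : 0 < t)
  have hmap : (1 + t • A).map (Complex.ofReal ·) = 1 + (t : ℂ) • A.map (Complex.ofReal ·) := by
    ext i j
    rcases eq_or_ne i j with rfl | hij <;> simp [one_apply_ne, *]
  rw [hmap, spectrum.one_add_smul_eq _ (by exact_mod_cast ht0.ne'), Set.forall_mem_image]
  exact ht

theorem IsMetzler.nonneg_of_mulVec_nonpos (hM : A.IsMetzler) (hH : A.IsHurwitz) {x : n → ℝ}
    (hx : A *ᵥ x ≤ 0) : 0 ≤ x := by
  obtain ⟨t, hP, hσ, ht⟩ := (hM.eventually_nonneg_one_add_smul.and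
    (hH.eventually_norm_lt_one_of_mem_spectrum_one_add_smul.and self_mem_nhdsWithin)).exists
  refine nonneg_of_mulVec_le_of_tendsto_pow hP (tendsto_pow_nhds_zero_of_forall_norm_lt_one hσ) ?_
  rw [add_mulVec, one_mulVec, smul_mulVec]
  exact add_le_of_nonpos_right (smul_nonpos_of_nonneg_of_nonpos ht.le hx)

theorem IsHurwitz.mulVec_surjective (hA : A.IsHurwitz) : Function.Surjective A.mulVec := by
  have hunit : IsUnit (A.map (Complex.ofReal ·)) :=
    spectrum.isUnit_of_zero_notMem (R := ℂ) fun h => lt_irrefl _ (hA 0 h)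
  rw [isUnit_iff_isUnit_det, isUnit_iff_ne_zero] at hunit
  rw [mulVec_surjective_iff_isUnit, isUnit_iff_isUnit_det, isUnit_iff_ne_zero]
  intro hdet
  apply hunit
  change (Complex.ofRealHom.mapMatrix A).det = 0
  rw [← Complex.ofRealHom.map_det A, hdet, map_zero]

end Matrix

open Matrix

theorem surjective_on_nonneg_orthant_of_metzler_hurwitz_general {n m : ℕ}
    (A : Matrix (Fin n) (Fin n) ℝ) (B : Matrix (Fin n) (Fin m) ℝ)
    (hMetzler : ∀ i j, i ≠ j → 0 ≤ A i j)
    (hHurwitz : ∀ μ ∈ spectrum ℂ (A.map (Complex.ofReal ·)), μ.re < 0)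
    (hBu0 : ∃ u0 : Fin m → ℝ, (∀ j, 0 ≤ u0 j) ∧ ∀ i, 0 < B.mulVec u0 i) :
    ∀ y : Fin n → ℝ, ∃ x : Fin n → ℝ, ∃ u : Fin m → ℝ,
      (∀ i, 0 ≤ x i) ∧ (∀ j, 0 ≤ u j) ∧ A.mulVec x + B.mulVec u = y := by
  intro y
  obtain ⟨u0, hu0, hBu0⟩ := hBu0
  obtain ⟨T, hT, hyT⟩ := exists_nonneg_le_smul_of_forall_pos hBu0 y
  obtain ⟨x, hx⟩ := IsHurwitz.mulVec_surjective hHurwitz (y - T • B *ᵥ u0)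
  have hx0 : 0 ≤ x := IsMetzler.nonneg_of_mulVec_nonpos hMetzler hHurwitz <| by
    rw [hx]
    exact sub_nonpos.2 hyT
  refine ⟨x, T • u0, hx0, fun j => mul_nonneg hT (hu0 j), ?_⟩
  rw [hx, mulVec_smul, sub_add_cancel]

/-- For `A` Metzler Hurwitz and `B ≥ 0` entrywise with `B u0 > 0`
for some `u0 ≥ 0`, the image of the nonnegative orthant under
`(x, u) ↦ Ax + Bu` is all of `ℝⁿ`. -/
theorem surjective_on_nonneg_orthant_of_metzler_hurwitz {n m : ℕ}
    (A : Matrix (Fin n) (Fin n) ℝ) (B : Matrix (Fin n) (Fin m) ℝ)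
    (hMetzler : ∀ i j, i ≠ j → 0 ≤ A i j)
    (hHurwitz : ∀ μ ∈ spectrum ℂ (A.map (Complex.ofReal ·)), μ.re < 0)
    (hB : ∀ i j, 0 ≤ B i j)
    (hBu0 : ∃ u0 : Fin m → ℝ, (∀ j, 0 ≤ u0 j) ∧ ∀ i, 0 < B.mulVec u0 i) :
    ∀ y : Fin n → ℝ, ∃ x : Fin n → ℝ, ∃ u : Fin m → ℝ,
      (∀ i, 0 ≤ x i) ∧ (∀ j, 0 ≤ u j) ∧ A.mulVec x + B.mulVec u = y :=
  surjective_on_nonneg_orthant_of_metzler_hurwitz_general A B hMetzler hHurwitz hBu0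
end

section
/- Let I ⊆ ℝ be an interval, t0 ∈ I, F : I → ℝ^{n×n} continuous, and let P : I → S^n be differentiable with Ṗ(t) = F(t)P(t) + P(t)F(t)^T on I and P(t0) positive semidefinite. Let X : I → ℝ^{n×n} be the solution of Ẋ(t) = F(t)X(t) with X(t0) = P(t0)^{1/2} (the positive semidefinite square root). Then P(t) = X(t)X(t)^T for all t ∈ I. -/
open Matrix Set

namespace Matrix.PosSemidef
noncomputable def sqrt {n 𝕜 : Type*} [Fintype n] [DecidableEq n] [RCLike 𝕜]
    [PartialOrder 𝕜] [StarOrderedRing 𝕜]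
    {A : Matrix n n 𝕜} (hA : A.PosSemidef) : Matrix n n 𝕜 :=
  hA.1.eigenvectorUnitary.1 * diagonal ((↑) ∘ Real.sqrt ∘ hA.1.eigenvalues) *
  (star hA.1.eigenvectorUnitary : Matrix n n 𝕜)
end Matrix.PosSemidef

/-!
Both `P` and `X Xᵀ` solve the linear Lyapunov equation `Ẏ = F Y + Y Fᵀ`: the first by
hypothesis, the second by the product rule applied to `Ẋ = F X`. They agree at `t0`, because
`U D Uᴴ` with `D` real diagonal is self-adjoint and squares to `U D² Uᴴ = P(t0)`. A linear ODE
with coefficients continuous on an interval has at most one solution through a given point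
(Grönwall, on each compact subinterval), so `P = X Xᵀ` on all of `I`.
-/

namespace Matrix.PosSemidef

open scoped ComplexOrder

variable {n 𝕜 : Type*} [Fintype n] [DecidableEq n] [RCLike 𝕜] {A : Matrix n n 𝕜}

theorem sqrt_mul_conjTranspose_sqrt (hA : A.PosSemidef) : hA.sqrt * hA.sqrtᴴ = A := by
  have hsqrt : hA.sqrt = Unitary.conjStarAlgAut 𝕜 _ hA.1.eigenvectorUnitary
      (diagonal ((↑) ∘ Real.sqrt ∘ hA.1.eigenvalues)) := rfl
  have hdiag : diagonal (((↑) ∘ Real.sqrt ∘ hA.1.eigenvalues) : n → 𝕜) *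
      (diagonal ((↑) ∘ Real.sqrt ∘ hA.1.eigenvalues))ᴴ =
        diagonal (RCLike.ofReal ∘ hA.1.eigenvalues) := by
    rw [diagonal_conjTranspose, diagonal_mul_diagonal]
    congr 1
    funext i
    simp only [Pi.star_apply, Function.comp_apply, RCLike.star_def, RCLike.conj_ofReal,
      ← RCLike.ofReal_mul, Real.mul_self_sqrt (hA.eigenvalues_nonneg i)]
  rw [hsqrt, ← star_eq_conjTranspose, ← map_star, ← map_mul, star_eq_conjTranspose, hdiag,
    ← hA.1.spectral_theorem]

theorem sqrt_mul_transpose_sqrt {A : Matrix n n ℝ} (hA : A.PosSemidef) :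
    hA.sqrt * hA.sqrtᵀ = A := by
  simpa using hA.sqrt_mul_conjTranspose_sqrt

end Matrix.PosSemidef

section LinearODE

variable {E : Type*} [NormedAddCommGroup E] [NormedSpace ℝ E] {A : ℝ → E →L[ℝ] E}
  {f g : ℝ → E}

theorem ODE_linear_solution_unique_of_mem_Icc {a b t₀ : ℝ} (hA : ContinuousOn A (Icc a b))
    (hf : ∀ t ∈ Icc a b, HasDerivWithinAt f (A t (f t)) (Icc a b) t)
    (hg : ∀ t ∈ Icc a b, HasDerivWithinAt g (A t (g t)) (Icc a b) t)
    (ht₀ : t₀ ∈ Icc a b) (heq : f t₀ = g t₀) :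
    EqOn f g (Icc a b) := by
  obtain ⟨C, hC⟩ := isCompact_Icc.exists_bound_of_continuousOn hA
  have hlip : ∀ t ∈ Icc a b, LipschitzOnWith C.toNNReal (A t) univ := fun t ht =>
    ((A t).lipschitz.weaken <| by
      rw [← NNReal.coe_le_coe, coe_nnnorm]
      exact (hC t ht).trans (Real.le_coe_toNNReal C)).lipschitzOnWith
  have hfc := HasDerivWithinAt.continuousOn hf
  have hgc := HasDerivWithinAt.continuousOn hg
  rw [← Icc_union_Icc_eq_Icc ht₀.1 ht₀.2]
  refine EqOn.union ?left ?right
  case left =>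
    have hsub : Icc a t₀ ⊆ Icc a b := Icc_subset_Icc_right ht₀.2
    have hleft : ∀ h : ℝ → E, (∀ t ∈ Icc a b, HasDerivWithinAt h (A t (h t)) (Icc a b) t) →
        ∀ t ∈ Ioc a t₀, HasDerivWithinAt h (A t (h t)) (Iic t) t := fun h hh t ht =>
      (hh t (hsub (Ioc_subset_Icc_self ht))).mono_of_mem_nhdsWithin <|
        Filter.mem_of_superset (Icc_mem_nhdsLE ht.1) (Icc_subset_Icc_right (ht.2.trans ht₀.2))
    exact ODE_solution_unique_of_mem_Icc_left
      (fun t ht => hlip t (hsub (Ioc_subset_Icc_self ht)))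
      (hfc.mono hsub) (hleft f hf) (fun _ _ => mem_univ _)
      (hgc.mono hsub) (hleft g hg) (fun _ _ => mem_univ _) heq
  case right =>
    have hsub : Icc t₀ b ⊆ Icc a b := Icc_subset_Icc_left ht₀.1
    have hright : ∀ h : ℝ → E, (∀ t ∈ Icc a b, HasDerivWithinAt h (A t (h t)) (Icc a b) t) →
        ∀ t ∈ Ico t₀ b, HasDerivWithinAt h (A t (h t)) (Ici t) t := fun h hh t ht =>
      (hh t (hsub (Ico_subset_Icc_self ht))).mono_of_mem_nhdsWithin <|
        Filter.mem_of_superset (Icc_mem_nhdsGE ht.2) (Icc_subset_Icc_left (ht₀.1.trans ht.1))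
    exact ODE_solution_unique_of_mem_Icc_right
      (fun t ht => hlip t (hsub (Ico_subset_Icc_self ht)))
      (hfc.mono hsub) (hright f hf) (fun _ _ => mem_univ _)
      (hgc.mono hsub) (hright g hg) (fun _ _ => mem_univ _) heq

theorem Set.OrdConnected.ODE_linear_solution_unique {I : Set ℝ} (hI : I.OrdConnected) {t₀ : ℝ}
    (hA : ContinuousOn A I)
    (hf : ∀ t ∈ I, HasDerivWithinAt f (A t (f t)) I t)
    (hg : ∀ t ∈ I, HasDerivWithinAt g (A t (g t)) I t)
    (ht₀ : t₀ ∈ I) (heq : f t₀ = g t₀) :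
    EqOn f g I := by
  intro t ht
  have hsub : uIcc t₀ t ⊆ I := hI.uIcc_subset ht₀ ht
  exact ODE_linear_solution_unique_of_mem_Icc (hA.mono hsub)
    (fun s hs => (hf s (hsub hs)).mono hsub) (fun s hs => (hg s (hsub hs)).mono hsub)
    left_mem_uIcc heq right_mem_uIcc

end LinearODE

section MatrixCalculus

variable {𝕜 : Type*} [NontriviallyNormedField 𝕜] {l m n : Type*} [Fintype n]
  {s : Set 𝕜} {x : 𝕜}

theorem hasDerivWithinAt_matrix {M : 𝕜 → Matrix m n 𝕜} {M' : Matrix m n 𝕜} :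
    HasDerivWithinAt M M' s x ↔ ∀ i j, HasDerivWithinAt (fun t => M t i j) (M' i j) s x :=
  hasDerivWithinAt_pi.trans (forall_congr' fun _ => hasDerivWithinAt_pi)

theorem HasDerivWithinAt.matrix_transpose [Fintype m] {M : 𝕜 → Matrix m n 𝕜}
    {M' : Matrix m n 𝕜} (hM : HasDerivWithinAt M M' s x) :
    HasDerivWithinAt (fun t => (M t)ᵀ) M'ᵀ s x :=
  hasDerivWithinAt_matrix.2 fun i j => hasDerivWithinAt_matrix.1 hM j i

theorem HasDerivWithinAt.matrix_mul [Fintype m] {M : 𝕜 → Matrix l m 𝕜} {N : 𝕜 → Matrix m n 𝕜}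
    {M' : Matrix l m 𝕜} {N' : Matrix m n 𝕜}
    (hM : HasDerivWithinAt M M' s x) (hN : HasDerivWithinAt N N' s x) :
    HasDerivWithinAt (fun t => M t * N t) (M' * N x + M x * N') s x := by
  refine hasDerivWithinAt_matrix.2 fun i j => ?_
  simp only [mul_apply, Matrix.add_apply, ← Finset.sum_add_distrib]
  exact HasDerivWithinAt.fun_sum (A := fun k t => M t i k * N t k j) fun k _ =>
    (hasDerivWithinAt_matrix.1 hM i k).mul (hasDerivWithinAt_matrix.1 hN k j)

end MatrixCalculus

-- Any norm would do: the ODE argument only sees the topology, and on a finite-dimensional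
-- space all norms induce the same one.
attribute [local instance] Matrix.normedAddCommGroup Matrix.normedSpace

namespace Matrix

variable {𝕜 : Type*} [NontriviallyNormedField 𝕜] [CompleteSpace 𝕜] {m : Type*} [Fintype m]
  [DecidableEq m]

noncomputable def lyapunovCLM (A : Matrix m m 𝕜) : Matrix m m 𝕜 →L[𝕜] Matrix m m 𝕜 :=
  LinearMap.toContinuousLinearMap (LinearMap.mulLeft 𝕜 A + LinearMap.mulRight 𝕜 Aᵀ)

@[simp]
theorem lyapunovCLM_apply (A M : Matrix m m 𝕜) : A.lyapunovCLM M = A * M + M * Aᵀ := rfl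

theorem continuous_lyapunovCLM :
    Continuous (lyapunovCLM : Matrix m m 𝕜 → Matrix m m 𝕜 →L[𝕜] Matrix m m 𝕜) :=
  continuous_clm_apply.2 fun M =>
    (by fun_prop : Continuous fun A : Matrix m m 𝕜 => A * M + M * Aᵀ)

end Matrix

theorem sqrt_factorization_of_lyapunov_flow_general {n : ℕ}
    (I : Set ℝ) (hI : I.OrdConnected) (t0 : ℝ) (ht0 : t0 ∈ I)
    (F : ℝ → Matrix (Fin n) (Fin n) ℝ) (hF : ContinuousOn F I)
    (P : ℝ → Matrix (Fin n) (Fin n) ℝ)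
    (hPdyn : ∀ t ∈ I, ∀ i j, HasDerivWithinAt (fun s => P s i j)
      ((F t * P t + P t * (F t)ᵀ) i j) I t)
    (hP0 : (P t0).PosSemidef)
    (X : ℝ → Matrix (Fin n) (Fin n) ℝ)
    (hXdyn : ∀ t ∈ I, ∀ i j, HasDerivWithinAt (fun s => X s i j)
      ((F t * X t) i j) I t)
    (hX0 : X t0 = hP0.sqrt) :
    ∀ t ∈ I, P t = X t * (X t)ᵀ := by
  have hP : ∀ t ∈ I, HasDerivWithinAt P ((F t).lyapunovCLM (P t)) I t := fun t ht =>
    hasDerivWithinAt_matrix.2 (hPdyn t ht)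
  have hXXt : ∀ t ∈ I, HasDerivWithinAt (fun s => X s * (X s)ᵀ)
      ((F t).lyapunovCLM (X t * (X t)ᵀ)) I t := by
    intro t ht
    have hX := hasDerivWithinAt_matrix.2 (hXdyn t ht)
    convert hX.matrix_mul hX.matrix_transpose using 1
    simp only [lyapunovCLM_apply, transpose_mul, Matrix.mul_assoc]
  exact hI.ODE_linear_solution_unique (continuous_lyapunovCLM.comp_continuousOn hF) hP hXXt ht0
    (by rw [hX0, hP0.sqrt_mul_transpose_sqrt])

/-- Let `I ⊆ ℝ` be an interval, `t0 ∈ I`, `F : I → ℝ^{n×n}`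
continuous, and `P : I → Sⁿ` differentiable (entrywise, within `I`) with
`Ṗ = F P + P Fᵀ` and `P(t0) ⪰ 0`. If `X` solves `Ẋ = F X` with
`X(t0) = P(t0)^{1/2}`, then `P(t) = X(t) X(t)ᵀ` on `I`. -/
theorem sqrt_factorization_of_lyapunov_flow {n : ℕ}
    (I : Set ℝ) (hI : I.OrdConnected) (t0 : ℝ) (ht0 : t0 ∈ I)
    (F : ℝ → Matrix (Fin n) (Fin n) ℝ) (hF : ContinuousOn F I)
    (P : ℝ → Matrix (Fin n) (Fin n) ℝ)
    (hPsymm : ∀ t ∈ I, (P t).IsSymm)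
    (hPdyn : ∀ t ∈ I, ∀ i j, HasDerivWithinAt (fun s => P s i j)
      ((F t * P t + P t * (F t)ᵀ) i j) I t)
    (hP0 : (P t0).PosSemidef)
    (X : ℝ → Matrix (Fin n) (Fin n) ℝ)
    (hXdyn : ∀ t ∈ I, ∀ i j, HasDerivWithinAt (fun s => X s i j)
      ((F t * X t) i j) I t)
    (hX0 : X t0 = hP0.sqrt) :
    ∀ t ∈ I, P t = X t * (X t)ᵀ :=
  sqrt_factorization_of_lyapunov_flow_general I hI t0 ht0 F hF P hPdyn hP0 X hXdyn hX0
end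

section
/- Let A ∈ ℝ^{n×n}, B ∈ ℝ^{n×m}, and let M ∈ ℝ^{(n+m)×(n+m)} be symmetric. If there exists a symmetric P ∈ ℝ^{n×n} such that M + [[A^T P + P A, P B],[B^T P, 0]] ⪯ 0, then for all x ∈ ℂ^n and u ∈ ℂ^m such that either x = 0 or iωx = Ax + Bu for some ω ∈ ℝ, one has (x;u)* M (x;u) ≤ 0. -/
open Matrix
open scoped ComplexOrder

lemma neg_complexify {ι : Type*} [Fintype ι] (H : Matrix ι ι ℝ) (hH : H.IsSymm)
    (h : ∀ v : ι → ℝ, v ⬝ᵥ H.mulVec v ≤ 0) (z : ι → ℂ) :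
    star z ⬝ᵥ (H.map (Complex.ofReal ·)).mulVec z ≤ 0 := by
  set a : ι → ℝ := fun i => (z i).re with ha
  set b : ι → ℝ := fun i => (z i).im with hb
  have hterm : ∀ i j, (star z i * ((H.map (Complex.ofReal ·)) i j * z j)) =
      Complex.mk (H i j * (a i * a j + b i * b j)) (H i j * (a i * b j - b i * a j)) := by
    intro i j
    apply Complex.ext <;>
      simp [Complex.mul_re, Complex.mul_im, Matrix.map_apply, a, b] <;> ring
  have hS : star z ⬝ᵥ (H.map (Complex.ofReal ·)).mulVec z =
      ∑ i, ∑ j, Complex.mk (H i j * (a i * a j + b i * b j)) (H i j * (a i * b j - b i * a j)) := by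
    simp only [dotProduct, mulVec, dotProduct, Finset.mul_sum, Pi.star_apply]
    exact Finset.sum_congr rfl fun i _ => Finset.sum_congr rfl fun j _ => hterm i j
  rw [hS, Complex.le_def]
  constructor
  · have : (∑ i, ∑ j, Complex.mk (H i j * (a i * a j + b i * b j))
        (H i j * (a i * b j - b i * a j))).re
        = a ⬝ᵥ H.mulVec a + b ⬝ᵥ H.mulVec b := by
      simp only [Complex.re_sum, dotProduct, mulVec, Finset.mul_sum, ← Finset.sum_add_distrib]
      refine Finset.sum_congr rfl fun i _ => Finset.sum_congr rfl fun j _ => ?_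
      show H i j * (a i * a j + b i * b j) = _
      ring
    rw [this]
    simpa using add_nonpos (h a) (h b)
  · have him : (∑ i, ∑ j, Complex.mk (H i j * (a i * a j + b i * b j))
        (H i j * (a i * b j - b i * a j))).im
        = ∑ i, ∑ j, H i j * (a i * b j) - ∑ i, ∑ j, H i j * (b i * a j) := by
      rw [show (∑ i, ∑ j, Complex.mk (H i j * (a i * a j + b i * b j))
          (H i j * (a i * b j - b i * a j))).im
          = ∑ i, ∑ j, (H i j * (a i * b j) - H i j * (b i * a j)) from by
        simp only [Complex.im_sum]
        exact Finset.sum_congr rfl fun i _ => Finset.sum_congr rfl fun j _ => by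
          show H i j * (a i * b j - b i * a j) = _; ring]
      simp only [Finset.sum_sub_distrib]
    rw [him]
    have hswap : ∑ i, ∑ j, H i j * (b i * a j) = ∑ i, ∑ j, H i j * (a i * b j) := by
      rw [Finset.sum_comm]
      refine Finset.sum_congr rfl fun i _ => Finset.sum_congr rfl fun j _ => ?_
      rw [← hH.apply i j]; ring
    simp [hswap]

lemma star_mulVec_real {k l : ℕ} (A : Matrix (Fin k) (Fin l) ℝ) (x : Fin l → ℂ) :
    (A.map (Complex.ofReal ·)).mulVec (star x) = star ((A.map (Complex.ofReal ·)).mulVec x) := by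
  funext i
  simp only [mulVec, dotProduct, Pi.star_apply, star_sum, star_mul', Matrix.map_apply]
  exact Finset.sum_congr rfl fun j _ => by simp [Complex.conj_ofReal, mul_comm]

/-- KYP, (i) ⇒ (ii). If there is a symmetric `P` with
`M + [[AᵀP + PA, PB], [BᵀP, 0]] ⪯ 0`, then for all complex `x, u` with `x = 0` or
`iωx = Ax + Bu` for some real `ω`, one has `(x;u)* M (x;u) ≤ 0`. -/
theorem kyp_lmi_implies_vector_constraint {n m : ℕ}
    (A : Matrix (Fin n) (Fin n) ℝ) (B : Matrix (Fin n) (Fin m) ℝ)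
    (M : Matrix (Fin n ⊕ Fin m) (Fin n ⊕ Fin m) ℝ) (hM : M.IsSymm)
    (hLMI : ∃ P : Matrix (Fin n) (Fin n) ℝ, P.IsSymm ∧
      ∀ v : Fin n ⊕ Fin m → ℝ,
        v ⬝ᵥ (M + Matrix.fromBlocks (Aᵀ * P + P * A) (P * B) (Bᵀ * P) 0).mulVec v ≤ 0) :
    ∀ (x : Fin n → ℂ) (u : Fin m → ℂ),
      (x = 0 ∨ ∃ ω : ℝ, (Complex.I * ω) • x =
        (A.map (Complex.ofReal ·)).mulVec x + (B.map (Complex.ofReal ·)).mulVec u) →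
      star (Sum.elim x u) ⬝ᵥ (M.map (Complex.ofReal ·)).mulVec (Sum.elim x u) ≤ 0 := by
  obtain ⟨P, hP, h⟩ := hLMI
  intro x u hcon
  set F : Matrix (Fin n ⊕ Fin m) (Fin n ⊕ Fin m) ℝ :=
    Matrix.fromBlocks (Aᵀ * P + P * A) (P * B) (Bᵀ * P) 0 with hF
  have hFsymm : F.IsSymm := by
    rw [Matrix.IsSymm, hF, fromBlocks_transpose]
    simp only [transpose_add, transpose_mul, transpose_transpose, transpose_zero, hP.eq]
    rw [add_comm (P * A) (Aᵀ * P)]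
  have hHsymm : (M + F).IsSymm := hM.add hFsymm
  have key := neg_complexify (M + F) hHsymm h (Sum.elim x u)
  have hmapadd : ((M + F).map (Complex.ofReal ·)) =
      M.map (Complex.ofReal ·) + F.map (Complex.ofReal ·) := by
    ext i j; simp
  rw [hmapadd, add_mulVec, dotProduct_add] at key
  have hstarelim : star (Sum.elim x u) = Sum.elim (star x) (star u) := by
    funext i; cases i <;> rfl
  set Ac := A.map (Complex.ofReal ·) with hAc
  set Bc := B.map (Complex.ofReal ·) with hBc
  set Pc := P.map (Complex.ofReal ·) with hPc
  have e1 : (Aᵀ * P + P * A).map (Complex.ofReal ·) = Acᵀ * Pc + Pc * Ac := by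
    ext i j
    simp [Matrix.mul_apply, Matrix.map_apply, Matrix.add_apply, hAc, hPc]
  have e2 : (P * B).map (Complex.ofReal ·) = Pc * Bc := by
    ext i j
    simp [Matrix.mul_apply, Matrix.map_apply, hBc, hPc]
  have e3 : (Bᵀ * P).map (Complex.ofReal ·) = Bcᵀ * Pc := by
    ext i j
    simp [Matrix.mul_apply, Matrix.map_apply, hBc, hPc]
  have e4 : ((0 : Matrix (Fin m) (Fin m) ℝ)).map (Complex.ofReal ·) =
      (0 : Matrix (Fin m) (Fin m) ℂ) := by
    ext i j; simp
  have hFmap : F.map (Complex.ofReal ·) =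
      Matrix.fromBlocks (Acᵀ * Pc + Pc * Ac) (Pc * Bc) (Bcᵀ * Pc) 0 := by
    rw [hF, fromBlocks_map, e1, e2, e3, e4]
  have hFzero : star (Sum.elim x u) ⬝ᵥ (F.map (Complex.ofReal ·)).mulVec (Sum.elim x u) = 0 := by
    rw [hstarelim, hFmap, fromBlocks_mulVec, sumElim_dotProduct_sumElim]
    simp only [Sum.elim_comp_inl, Sum.elim_comp_inr]
    rcases hcon with hx0 | ⟨ω, hω⟩
    · subst hx0
      simp
    · have expand :
        star x ⬝ᵥ ((Acᵀ * Pc + Pc * Ac).mulVec x + (Pc * Bc).mulVec u)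
          + star u ⬝ᵥ ((Bcᵀ * Pc).mulVec x + (0 : Matrix (Fin m) (Fin m) ℂ).mulVec u)
        = (Ac.mulVec (star x) + Bc.mulVec (star u)) ⬝ᵥ Pc.mulVec x
          + star x ⬝ᵥ Pc.mulVec (Ac.mulVec x + Bc.mulVec u) := by
        rw [add_mulVec, zero_mulVec, add_zero, dotProduct_add, dotProduct_add, add_dotProduct]
        rw [← mulVec_mulVec x Acᵀ Pc, ← mulVec_mulVec x Bcᵀ Pc, ← mulVec_mulVec x Pc Ac,
          ← mulVec_mulVec u Pc Bc, mulVec_add]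
        rw [dotProduct_mulVec (star x) Acᵀ, vecMul_transpose,
          dotProduct_mulVec (star u) Bcᵀ, vecMul_transpose, dotProduct_add]
        ring
      rw [expand, ← hω]
      have hconj : star (Complex.I * (ω : ℂ)) = -(Complex.I * ω) := by
        rw [Complex.star_def, _root_.map_mul, Complex.conj_I, Complex.conj_ofReal]
        ring
      have hstar : Ac.mulVec (star x) + Bc.mulVec (star u) = (-(Complex.I * ω)) • star x := by
        rw [hAc, hBc, star_mulVec_real A x, star_mulVec_real B u, ← star_add, ← hAc, ← hBc,
          ← hω, star_smul, hconj]
      rw [hstar, smul_dotProduct, mulVec_smul, dotProduct_smul, smul_eq_mul, smul_eq_mul]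
      ring
  rw [hFzero, add_zero] at key
  exact key
end
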